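/- arXiv:2306.05306 — 7 statements merged into one kernel-verified Lean document; each statement's English description precedes it below -/
import Mathlib

section
/- Let G = (V,E) be a finite graph, and consider the signed graph (G,σ) with the all-minus signature σ ≡ −1 and the counting measure π ≡ 1. Then h_out^σ ≥ β_out, i.e. the signed outer vertex isoperimetric constant of (G,−1) is at least the outer vertex bipartiteness constant of G. -/
attribute [local instance] Classical.propDecidable

/-- The outer vertex boundary of a finite set `U`: vertices outside `U` with a neighbor in `U`. -/
noncomputable def outBd {V : Type*} [Fintype V] (Adj : V → V → Prop) (U : Finset V) : Finset V :=
  Finset.univ.filter fun y => y ∉ U ∧ ∃ x ∈ U, Adj x y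

/-- `I(L)` is the number of vertices of `L` having a neighbor in `L`. -/
noncomputable def II {V : Type*} (Adj : V → V → Prop) (L : Finset V) : ℕ :=
  (L.filter fun x => ∃ y ∈ L, Adj x y).card

/-- The outer vertex bipartiteness constant `β_out`. -/
noncomputable def betaOut {V : Type*} [Fintype V] (Adj : V → V → Prop) : ℝ :=
  sInf {r : ℝ | ∃ L R : Finset V, Disjoint L R ∧ (L ∪ R).Nonempty ∧
    r = ((II Adj L : ℝ) + (II Adj R : ℝ) + ((outBd Adj (L ∪ R)).card : ℝ)) /
      ((L ∪ R).card : ℝ)}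

/-- The `∞`-frustration index `ι_∞^{σ,π}(U)` of a subset `U` of a signed graph. -/
noncomputable def iotaInf {V : Type*} [Fintype V] (Adj : V → V → Prop) (σ : V → V → ℝ)
    (π : V → ℝ) (U : Finset V) : ℝ :=
  sInf {r : ℝ | ∃ τ : V → ℝ, (∀ x : V, τ x = 1 ∨ τ x = -1) ∧
    r = (1 / 2) * ∑ x ∈ U,
      (⨆ y ∈ {y : V | y ∈ U ∧ Adj x y}, |τ x - σ x y * τ y|) * π x}

/-- The signed outer vertex isoperimetric constant `h_out^σ`. -/
noncomputable def hOutSigned {V : Type*} [Fintype V] (Adj : V → V → Prop) (σ : V → V → ℝ)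
    (π : V → ℝ) : ℝ :=
  sInf {r : ℝ | ∃ U : Finset V, U.Nonempty ∧
    r = (2 * iotaInf Adj σ π U + ∑ y ∈ outBd Adj U, π y) / ∑ x ∈ U, π x}

lemma betaOut_bddBelow {V : Type*} [Fintype V] (Adj : V → V → Prop) :
    BddBelow {r : ℝ | ∃ L R : Finset V, Disjoint L R ∧ (L ∪ R).Nonempty ∧
      r = ((II Adj L : ℝ) + (II Adj R : ℝ) + ((outBd Adj (L ∪ R)).card : ℝ)) /
        ((L ∪ R).card : ℝ)} := by
  refine ⟨0, ?_⟩
  rintro r ⟨L, R, -, -, rfl⟩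
  positivity

/-- For the all-minus signature and the counting measure, the signed outer vertex isoperimetric
constant is at least the outer vertex bipartiteness constant: `h_out^σ ≥ β_out`. -/
theorem hOutSigned_ge_betaOut {V : Type*} [Fintype V] (Adj : V → V → Prop)
    (hsymm : ∀ x y : V, Adj x y → Adj y x) :
    hOutSigned Adj (fun _ _ => (-1 : ℝ)) (fun _ => 1) ≥ betaOut Adj := by
  classical
  rcases isEmpty_or_nonempty V with hE | hNE
  · have e1 : hOutSigned Adj (fun _ _ => (-1 : ℝ)) (fun _ => 1) = 0 := by
      rw [hOutSigned]
      convert Real.sInf_empty using 2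
      rw [Set.eq_empty_iff_forall_notMem]
      rintro r ⟨U, ⟨v, -⟩, -⟩
      exact hE.elim v
    have e2 : betaOut Adj = 0 := by
      rw [betaOut]
      convert Real.sInf_empty using 2
      rw [Set.eq_empty_iff_forall_notMem]
      rintro r ⟨L, R, -, ⟨v, -⟩, -⟩
      exact hE.elim v
    rw [e1, e2]
  · apply le_csInf
    · exact ⟨_, ⟨{Classical.arbitrary V}, Finset.singleton_nonempty _, rfl⟩⟩
    · rintro r ⟨U, hU, rfl⟩
      simp only []
      set c : ℝ := ∑ x ∈ U, (1:ℝ) with hcdef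
      have hcard : c = (U.card : ℝ) := by simp [hcdef]
      have hcpos : 0 < c := by
        rw [hcard]; exact_mod_cast Finset.card_pos.mpr hU
      set bd : ℝ := ∑ y ∈ outBd Adj U, (1:ℝ) with hbddef
      have hbd : bd = ((outBd Adj U).card : ℝ) := by simp [hbddef]
      -- key per-τ bound
      have key : ∀ τ : V → ℝ, (∀ x : V, τ x = 1 ∨ τ x = -1) →
          betaOut Adj * c - bd ≤
            ∑ x ∈ U, (⨆ y ∈ {y : V | y ∈ U ∧ Adj x y}, |τ x - (-1) * τ y|) * (1:ℝ) := by
        intro τ hτ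
        have habs : ∀ x y : V, |τ x - (-1) * τ y| ≤ 2 := by
          intro x y
          rcases hτ x with h | h <;> rcases hτ y with h' | h' <;> rw [h, h'] <;> norm_num
        have hsup_nonneg : ∀ x : V,
            0 ≤ ⨆ y ∈ {y : V | y ∈ U ∧ Adj x y}, |τ x - (-1) * τ y| :=
          fun x => Real.iSup_nonneg fun y => Real.iSup_nonneg fun _ => abs_nonneg _
        have hsup_ge : ∀ x y0 : V, y0 ∈ U → Adj x y0 → τ y0 = τ x →
            2 ≤ ⨆ y ∈ {y : V | y ∈ U ∧ Adj x y}, |τ x - (-1) * τ y| := by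
          intro x y0 hy0 hadj heq
          have hb : BddAbove (Set.range fun y =>
              ⨆ _ : y ∈ {y : V | y ∈ U ∧ Adj x y}, |τ x - (-1) * τ y|) := by
            refine ⟨2, ?_⟩
            rintro _ ⟨y, rfl⟩
            exact Real.iSup_le (fun _ => habs x y) (by norm_num)
          have hmem : y0 ∈ {y : V | y ∈ U ∧ Adj x y} := ⟨hy0, hadj⟩
          have hval : |τ x - (-1) * τ y0| = 2 := by
            rw [heq]; rcases hτ x with h | h <;> rw [h] <;> norm_num
          calc (2:ℝ) = |τ x - (-1) * τ y0| := hval.symm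
            _ = ⨆ _ : y0 ∈ {y : V | y ∈ U ∧ Adj x y}, |τ x - (-1) * τ y0| :=
                (ciSup_pos (f := fun _ => |τ x - (-1) * τ y0|) hmem).symm
            _ ≤ ⨆ y, ⨆ _ : y ∈ {y : V | y ∈ U ∧ Adj x y}, |τ x - (-1) * τ y| :=
                le_ciSup hb y0
        set L : Finset V := U.filter (fun x => τ x = 1) with hLdef
        set R : Finset V := U.filter (fun x => τ x = -1) with hRdef
        have hLR : L ∪ R = U := by
          ext x
          simp only [hLdef, hRdef, Finset.mem_union, Finset.mem_filter]
          rcases hτ x with h | h <;> rw [h] <;> norm_num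
        have hdisj : Disjoint L R := by
          rw [Finset.disjoint_left]
          intro a haL haR
          rw [hLdef, Finset.mem_filter] at haL
          rw [hRdef, Finset.mem_filter] at haR
          rw [haL.2] at haR
          norm_num at haR
        have hmemβ : ((II Adj L : ℝ) + (II Adj R : ℝ) + ((outBd Adj (L ∪ R)).card : ℝ)) /
            ((L ∪ R).card : ℝ) ∈ {r : ℝ | ∃ L' R' : Finset V, Disjoint L' R' ∧
              (L' ∪ R').Nonempty ∧
              r = ((II Adj L' : ℝ) + (II Adj R' : ℝ) + ((outBd Adj (L' ∪ R')).card : ℝ)) /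
                ((L' ∪ R').card : ℝ)} :=
          ⟨L, R, hdisj, hLR.symm ▸ hU, rfl⟩
        have hβ1 : betaOut Adj ≤
            ((II Adj L : ℝ) + (II Adj R : ℝ) + ((outBd Adj U).card : ℝ)) / ((U.card : ℝ)) := by
          have := csInf_le (betaOut_bddBelow Adj) hmemβ
          rw [hLR] at this
          exact this
        have hβ : betaOut Adj * c ≤ (II Adj L : ℝ) + (II Adj R : ℝ) + bd := by
          rw [hcard, hbd]
          have hU' : (0:ℝ) < (U.card : ℝ) := by rw [← hcard]; exact hcpos
          calc betaOut Adj * (U.card : ℝ)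
              ≤ (((II Adj L : ℝ) + (II Adj R : ℝ) + ((outBd Adj U).card : ℝ)) /
                  ((U.card : ℝ))) * (U.card : ℝ) := by
                exact mul_le_mul_of_nonneg_right hβ1 (le_of_lt hU')
            _ = (II Adj L : ℝ) + (II Adj R : ℝ) + ((outBd Adj U).card : ℝ) := by
                field_simp
        -- the frustrated vertices
        set F : Finset V := (L.filter fun x => ∃ y ∈ L, Adj x y) ∪
          (R.filter fun x => ∃ y ∈ R, Adj x y) with hFdef
        have hFsub : F ⊆ U := by
          intro x hx
          rw [hFdef, Finset.mem_union] at hx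
          rcases hx with hx | hx
          · exact hLR ▸ Finset.mem_union_left R (Finset.mem_of_mem_filter x hx)
          · exact hLR ▸ Finset.mem_union_right L (Finset.mem_of_mem_filter x hx)
        have hFdisj : Disjoint (L.filter fun x => ∃ y ∈ L, Adj x y)
            (R.filter fun x => ∃ y ∈ R, Adj x y) :=
          hdisj.mono (Finset.filter_subset _ _) (Finset.filter_subset _ _)
        have hFcard : (F.card : ℝ) = (II Adj L : ℝ) + (II Adj R : ℝ) := by
          rw [hFdef, Finset.card_union_of_disjoint hFdisj]
          push_cast [II]
          ring
        have hFtwo : ∀ x ∈ F, (2:ℝ) ≤ ⨆ y ∈ {y : V | y ∈ U ∧ Adj x y}, |τ x - (-1) * τ y| := by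
          intro x hx
          rw [hFdef, Finset.mem_union] at hx
          rcases hx with hx | hx
          · rw [Finset.mem_filter] at hx
            obtain ⟨hxL, y, hyL, hadj⟩ := hx
            rw [hLdef, Finset.mem_filter] at hxL hyL
            exact hsup_ge x y hyL.1 hadj (by rw [hyL.2, hxL.2])
          · rw [Finset.mem_filter] at hx
            obtain ⟨hxR, y, hyR, hadj⟩ := hx
            rw [hRdef, Finset.mem_filter] at hxR hyR
            exact hsup_ge x y hyR.1 hadj (by rw [hyR.2, hxR.2])
        have hSig : ((II Adj L : ℝ) + (II Adj R : ℝ)) * 2 ≤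
            ∑ x ∈ U, (⨆ y ∈ {y : V | y ∈ U ∧ Adj x y}, |τ x - (-1) * τ y|) * (1:ℝ) := by
          calc ((II Adj L : ℝ) + (II Adj R : ℝ)) * 2 = (F.card : ℝ) * 2 := by rw [hFcard]
            _ = ∑ _x ∈ F, (2:ℝ) := by rw [Finset.sum_const, nsmul_eq_mul]
            _ ≤ ∑ x ∈ F, (⨆ y ∈ {y : V | y ∈ U ∧ Adj x y}, |τ x - (-1) * τ y|) * (1:ℝ) := by
                refine Finset.sum_le_sum ?_
                intro x hx
                rw [mul_one]
                exact hFtwo x hx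
            _ ≤ ∑ x ∈ U, (⨆ y ∈ {y : V | y ∈ U ∧ Adj x y}, |τ x - (-1) * τ y|) * (1:ℝ) := by
                refine Finset.sum_le_sum_of_subset_of_nonneg hFsub ?_
                intro x _ _
                rw [mul_one]
                exact hsup_nonneg x
        have hnn : (0:ℝ) ≤ (II Adj L : ℝ) + (II Adj R : ℝ) := by positivity
        linarith
      have hiota : (betaOut Adj * c - bd) / 2 ≤
          iotaInf Adj (fun _ _ => (-1 : ℝ)) (fun _ => 1) U := by
        apply le_csInf
        · exact ⟨_, fun _ => (1:ℝ), fun _ => Or.inl rfl, rfl⟩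
        · rintro b ⟨τ, hτ, rfl⟩
          simp only []
          have hk := key τ hτ
          linarith
      rw [le_div_iff₀ hcpos]
      linarith
end

section
/- Let (G,σ) be a finite signed graph with an arbitrary vertex measure π : V → ℝ_{>0}. Then λ_∞^σ ≥ (√(1 + h_out^σ) − 1)². -/
attribute [local instance] Classical.propDecidable

/-- The Poincaré-type constant `λ_∞^σ` of a signed graph with vertex measure `π`: the largest
`λ` with `λ ∑ f(x)² π(x) ≤ ∑ sup_{y∼x} |f(x) − σ_{xy} f(y)|² π(x)` for all `f`. -/
noncomputable def lamInf {V : Type*} [Fintype V] (Adj : V → V → Prop) (σ : V → V → ℝ)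
    (π : V → ℝ) : ℝ :=
  sSup {lam : ℝ | ∀ f : V → ℝ,
    lam * ∑ x : V, f x ^ 2 * π x ≤
      ∑ x : V, (⨆ y ∈ {y : V | Adj x y}, |f x - σ x y * f y| ^ 2) * π x}

/-!
Coarea argument over the level sets `U_t = {x | t ≤ f(x)²}` of a test function `f`. Each nonempty
`U_t` gives `h · π(U_t) ≤ 2ι(U_t) + π(∂U_t)`, and `ι(U_t)` is at most the mass of the vertices of
`U_t` frustrated by the sign pattern of `f`. Integrating in `t` (a telescoping sum over the values
of `f²`) yields `h ‖f‖² ≤ ∑ₓ (2αₓ + βₓ) π(x)`, where `αₓ` (resp. `βₓ`) is the measure of the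
levels `t` at which `x` is frustrated in `U_t` (resp. lies in `∂U_t`). A frustrated edge `xy` has
`|f x| + |f y| ≤ |∇f|(x)`, so `αₓ ≤ min (f(x)², f(y)²)`, and a boundary crossing gives
`βₓ ≤ 2|f x| |∇f|(x) + |∇f|(x)²`. The elementary bound `2ε min (a², b²) ≤ (D - εa)²` for
`a + b ≤ D` and `ε ≤ 3/4` makes the cross terms cancel:
`ε h ‖f‖² ≤ (1 + ε) ∑ₓ |∇f|(x)² π(x) + ε² ‖f‖²`.
Since `h ≤ 2`, `ε = √(1 + h) - 1 ≤ √3 - 1 < 3/4`, and for this `ε` the bound reads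
`ε² ‖f‖² ≤ ∑ₓ |∇f|(x)² π(x)`.
-/

open Finset

noncomputable def prevVal (T : Finset ℝ) (t : ℝ) : ℝ :=
  (insert 0 (T.filter (· < t))).max' (insert_nonempty _ _)

lemma prevVal_lt {T : Finset ℝ} {t : ℝ} (ht : 0 < t) : prevVal T t < t :=
  (max'_lt_iff _ _).2 fun s hs => by
    rcases mem_insert.1 hs with rfl | hs
    exacts [ht, (mem_filter.1 hs).2]

lemma prevVal_insert_of_le {T : Finset ℝ} {m t : ℝ} (h : t ≤ m) :
    prevVal (insert m T) t = prevVal T t := by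
  simp only [prevVal, filter_insert, if_neg (not_lt.2 h)]

theorem sum_filter_le_sub_prevVal {T : Finset ℝ} (hT : ∀ t ∈ T, 0 < t) {a : ℝ}
    (ha : a ∈ insert 0 T) : ∑ t ∈ T with t ≤ a, (t - prevVal T t) = a := by
  induction T using Finset.induction_on_max generalizing a with
  | empty => simp_all
  | insert m T hlt ih =>
    have hT' : ∀ t ∈ T, 0 < t := fun t ht => hT t (mem_insert_of_mem ht)
    have hsum : ∀ b, ∑ t ∈ insert m T with t ≤ b, (t - prevVal (insert m T) t)
        = (if m ≤ b then m - prevVal (insert m T) m else 0)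
          + ∑ t ∈ T with t ≤ b, (t - prevVal T t) := by
      intro b
      rw [filter_insert]
      split_ifs with hmb
      · rw [sum_insert fun h => lt_irrefl m (hlt m (mem_filter.1 h).1)]
        exact congrArg _ (sum_congr rfl fun t ht =>
          by rw [prevVal_insert_of_le (hlt t (mem_filter.1 ht).1).le])
      · rw [zero_add]
        exact sum_congr rfl fun t ht =>
          by rw [prevVal_insert_of_le (hlt t (mem_filter.1 ht).1).le]
    rw [hsum]
    rcases eq_or_ne a m with rfl | ham
    · have hp : prevVal (insert a T) a = (insert 0 T).max' (insert_nonempty _ _) := by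
        simp only [prevVal, filter_insert, lt_irrefl, if_false, filter_true_of_mem hlt]
      have hTp := ih hT' (max'_mem (insert 0 T) (insert_nonempty _ _))
      rw [filter_true_of_mem fun t ht => le_max' _ _ (mem_insert_of_mem ht)] at hTp
      rw [if_pos le_rfl, hp, filter_true_of_mem fun t ht => (hlt t ht).le, hTp, sub_add_cancel]
    · have ha' : a ∈ insert 0 T := by
        rcases mem_insert.1 ha with rfl | ha
        · exact mem_insert_self _ _
        · exact mem_insert_of_mem ((mem_insert.1 ha).resolve_left ham)
      have ham' : a < m := by
        rcases mem_insert.1 ha' with rfl | ha'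
        exacts [hT m (mem_insert_self _ _), hlt a ha']
      rw [if_neg (not_le.2 ham'), zero_add, ih hT' ha']

theorem sum_filter_sub_prevVal_le {T : Finset ℝ} (hT : ∀ t ∈ T, 0 < t) {P : ℝ → Prop} {b c : ℝ}
    (hb : b ∈ insert 0 T) (hbc : b ≤ c) (hP : ∀ t ∈ T, P t → b < t ∧ t ≤ c) :
    ∑ t ∈ T with P t, (t - prevVal T t) ≤ c - b := by
  obtain ⟨a, ha, hba, hac, hle⟩ : ∃ a ∈ insert 0 T, b ≤ a ∧ a ≤ c ∧ ∀ t ∈ T, t ≤ c → t ≤ a := by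
    refine ⟨(insert b (T.filter (· ≤ c))).max' (insert_nonempty _ _), ?_,
      le_max' _ _ (mem_insert_self _ _), (max'_le_iff _ _).2 fun s hs => ?_,
      fun t ht htc => le_max' _ _ (mem_insert_of_mem (mem_filter.2 ⟨ht, htc⟩))⟩
    · rcases mem_insert.1 (max'_mem (insert b (T.filter (· ≤ c))) (insert_nonempty _ _)) with h | h
      · rw [h]; exact hb
      · exact mem_insert_of_mem (mem_filter.1 h).1
    · rcases mem_insert.1 hs with rfl | hs
      exacts [hbc, (mem_filter.1 hs).2]
  have hw : ∀ t ∈ T, 0 ≤ t - prevVal T t := fun t ht => (sub_pos.2 (prevVal_lt (hT t ht))).le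
  calc ∑ t ∈ T with P t, (t - prevVal T t)
      ≤ ∑ t ∈ T with b < t ∧ t ≤ a, (t - prevVal T t) := by
        refine sum_le_sum_of_subset_of_nonneg (fun t ht => ?_)
          fun t ht _ => hw t (mem_filter.1 ht).1
        obtain ⟨htT, hPt⟩ := mem_filter.1 ht
        obtain ⟨hbt, htc⟩ := hP t htT hPt
        exact mem_filter.2 ⟨htT, hbt, hle t htT htc⟩
    _ = ∑ t ∈ T with t ≤ a, (t - prevVal T t) - ∑ t ∈ T with t ≤ b, (t - prevVal T t) := by
      rw [eq_sub_iff_add_eq, sum_filter, sum_filter, sum_filter, ← sum_add_distrib]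
      refine sum_congr rfl fun t _ => ?_
      by_cases hta : t ≤ a <;> by_cases htb : t ≤ b <;> simp [hta, htb]
      linarith
    _ = a - b := by rw [sum_filter_le_sub_prevVal hT ha, sum_filter_le_sub_prevVal hT hb]
    _ ≤ c - b := by linarith

lemma two_mul_min_sq_le_sq {e a D : ℝ} (he0 : 0 ≤ e) (he : e ≤ 3 / 4) (ha : 0 ≤ a)
    (haD : a ≤ D) : 2 * e * min (a ^ 2) ((D - a) ^ 2) ≤ (D - e * a) ^ 2 := by
  have hq : 2 * e ≤ (2 - e) ^ 2 := by nlinarith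
  rcases le_total a (D - a) with h | h
  · have hm : (2 - e) * a ≤ D - e * a := by linarith
    calc 2 * e * min (a ^ 2) ((D - a) ^ 2) ≤ (2 - e) ^ 2 * a ^ 2 :=
          mul_le_mul hq (min_le_left _ _) (le_min (sq_nonneg _) (sq_nonneg _)) (sq_nonneg _)
      _ ≤ (D - e * a) ^ 2 := by rw [← mul_pow]; exact pow_le_pow_left₀ (by nlinarith) hm 2
  · have hm : (2 - e) * (D - a) ≤ D - e * a := by nlinarith
    calc 2 * e * min (a ^ 2) ((D - a) ^ 2) ≤ (2 - e) ^ 2 * (D - a) ^ 2 :=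
          mul_le_mul hq (min_le_right _ _) (le_min (sq_nonneg _) (sq_nonneg _)) (sq_nonneg _)
      _ ≤ (D - e * a) ^ 2 := by rw [← mul_pow]; exact pow_le_pow_left₀ (by nlinarith) hm 2

lemma sum_mul_sum_eq_sum_sum_mul {α β : Type*} [Fintype β] (T : Finset α) (w : α → ℝ)
    (B : α → Finset β) (c : β → ℝ) :
    ∑ t ∈ T, w t * ∑ x ∈ B t, c x = ∑ x, (∑ t ∈ T with x ∈ B t, w t) * c x := by
  simp_rw [mul_sum, sum_mul]
  exact sum_comm' fun t x => by simp

-- Unlike `Real.sign`, this never vanishes, so `pmSign ∘ f` is an admissible `τ` in `iotaInf`.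
noncomputable def pmSign (r : ℝ) : ℝ := if 0 ≤ r then 1 else -1

lemma pmSign_eq_one_or (r : ℝ) : pmSign r = 1 ∨ pmSign r = -1 := by
  unfold pmSign; split_ifs <;> simp

lemma pmSign_mul_self (r : ℝ) : pmSign r * r = |r| := by
  unfold pmSign
  split_ifs with h
  · rw [one_mul, abs_of_nonneg h]
  · rw [neg_one_mul, abs_of_neg (not_le.1 h)]

lemma abs_sub_mul_eq_one_sub {s a b : ℝ} (hs : s = 1 ∨ s = -1) (ha : a = 1 ∨ a = -1)
    (hb : b = 1 ∨ b = -1) : |a - s * b| = 1 - s * a * b := by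
  rcases hs with rfl | rfl <;> rcases ha with rfl | rfl <;> rcases hb with rfl | rfl <;> norm_num

lemma abs_add_abs_le_abs_sub {s u v : ℝ} (hs : s * pmSign u * pmSign v = -1) :
    |u| + |v| ≤ |u - s * v| := by
  have hv : pmSign v ^ 2 = 1 := by rcases pmSign_eq_one_or v with h | h <;> rw [h] <;> norm_num
  calc |u| + |v| = pmSign u * (u - s * v) := by
        rw [← pmSign_mul_self u, ← pmSign_mul_self v]
        linear_combination (v * pmSign v) * hs - (v * s * pmSign u) * hv
    _ ≤ |pmSign u * (u - s * v)| := le_abs_self _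
    _ = |u - s * v| := by
        rw [abs_mul]; rcases pmSign_eq_one_or u with h | h <;> rw [h] <;> norm_num

section SignedGraph

variable {V : Type*}

noncomputable def frustration (Adj : V → V → Prop) (σ : V → V → ℝ) (π : V → ℝ) (τ : V → ℝ)
    (U : Finset V) : ℝ :=
  (1 / 2) * ∑ x ∈ U, (⨆ y ∈ {y : V | y ∈ U ∧ Adj x y}, |τ x - σ x y * τ y|) * π x

noncomputable def frustratedSet (Adj : V → V → Prop) (σ : V → V → ℝ) (τ : V → ℝ)
    (U : Finset V) : Finset V :=
  U.filter fun x => ∃ y ∈ U, Adj x y ∧ σ x y * τ x * τ y = -1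

noncomputable def localGrad (Adj : V → V → Prop) (σ : V → V → ℝ) (f : V → ℝ) (x : V) : ℝ :=
  √(⨆ y ∈ {y : V | Adj x y}, |f x - σ x y * f y| ^ 2)

variable {Adj : V → V → Prop} {σ : V → V → ℝ} {π : V → ℝ}

lemma frustration_nonneg (hπ : ∀ x, 0 ≤ π x) (τ : V → ℝ) (U : Finset V) :
    0 ≤ frustration Adj σ π τ U :=
  mul_nonneg (by norm_num) <| sum_nonneg fun x _ => mul_nonneg
    (Real.iSup_nonneg fun _ => Real.iSup_nonneg fun _ => abs_nonneg _) (hπ x)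

lemma frustration_le_sum_frustratedSet (hπ : ∀ x, 0 ≤ π x)
    (hσ : ∀ x y, Adj x y → σ x y = 1 ∨ σ x y = -1) {τ : V → ℝ} (hτ : ∀ x, τ x = 1 ∨ τ x = -1)
    (U : Finset V) : frustration Adj σ π τ U ≤ ∑ x ∈ frustratedSet Adj σ τ U, π x := by
  rw [frustration, frustratedSet, sum_filter, mul_sum]
  refine sum_le_sum fun x _ => ?_
  have hsup : (⨆ y ∈ {y : V | y ∈ U ∧ Adj x y}, |τ x - σ x y * τ y|)
      ≤ if ∃ y ∈ U, Adj x y ∧ σ x y * τ x * τ y = -1 then 2 else 0 := by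
    refine Real.iSup_le (fun y => Real.iSup_le (fun ⟨hyU, hxy⟩ => ?_) (by split_ifs <;> norm_num))
      (by split_ifs <;> norm_num)
    have hp : σ x y * τ x * τ y = 1 ∨ σ x y * τ x * τ y = -1 := by
      rcases hσ x y hxy with h | h <;> rcases hτ x with h' | h' <;> rcases hτ y with h'' | h'' <;>
        norm_num [h, h', h'']
    rw [abs_sub_mul_eq_one_sub (hσ x y hxy) (hτ x) (hτ y)]
    split_ifs with h
    · rcases hp with hp | hp <;> linarith
    · linarith [hp.resolve_right fun hp => h ⟨y, hyU, hxy, hp⟩]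
  split_ifs at hsup ⊢ <;> nlinarith [hπ x]

lemma sq_localGrad (f : V → ℝ) (x : V) :
    localGrad Adj σ f x ^ 2 = ⨆ y ∈ {y : V | Adj x y}, |f x - σ x y * f y| ^ 2 :=
  Real.sq_sqrt (Real.iSup_nonneg fun _ => Real.iSup_nonneg fun _ => sq_nonneg _)

variable [Fintype V]

lemma iotaInf_nonneg (hπ : ∀ x, 0 ≤ π x) (U : Finset V) : 0 ≤ iotaInf Adj σ π U :=
  Real.sInf_nonneg <| by rintro _ ⟨τ, -, rfl⟩; exact frustration_nonneg hπ τ U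

lemma iotaInf_le_frustration (hπ : ∀ x, 0 ≤ π x) {τ : V → ℝ} (hτ : ∀ x, τ x = 1 ∨ τ x = -1)
    (U : Finset V) : iotaInf Adj σ π U ≤ frustration Adj σ π τ U :=
  csInf_le ⟨0, by rintro _ ⟨τ, -, rfl⟩; exact frustration_nonneg hπ τ U⟩ ⟨τ, hτ, rfl⟩

lemma iotaInf_outBd_div_nonneg (hπ : ∀ x, 0 ≤ π x) (U : Finset V) :
    0 ≤ (2 * iotaInf Adj σ π U + ∑ y ∈ outBd Adj U, π y) / ∑ x ∈ U, π x :=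
  div_nonneg (add_nonneg (mul_nonneg two_pos.le (iotaInf_nonneg hπ U))
    (sum_nonneg fun y _ => hπ y)) (sum_nonneg fun x _ => hπ x)

lemma hOutSigned_nonneg (hπ : ∀ x, 0 ≤ π x) : 0 ≤ hOutSigned Adj σ π :=
  Real.sInf_nonneg <| by rintro _ ⟨U, -, rfl⟩; exact iotaInf_outBd_div_nonneg hπ U

lemma hOutSigned_mul_sum_le (hπ : ∀ x, 0 < π x) {U : Finset V} (hU : U.Nonempty) :
    hOutSigned Adj σ π * ∑ x ∈ U, π x ≤ 2 * iotaInf Adj σ π U + ∑ y ∈ outBd Adj U, π y := by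
  refine (le_div_iff₀ (sum_pos (fun x _ => hπ x) hU)).1 (csInf_le ⟨0, ?_⟩ ⟨U, hU, rfl⟩)
  rintro _ ⟨U, -, rfl⟩
  exact iotaInf_outBd_div_nonneg (fun x => (hπ x).le) U

lemma outBd_univ : outBd Adj (univ : Finset V) = ∅ :=
  filter_false_of_mem fun y _ hy => hy.1 (mem_univ y)

lemma hOutSigned_le_two [Nonempty V] (hπ : ∀ x, 0 < π x)
    (hσ : ∀ x y, Adj x y → σ x y = 1 ∨ σ x y = -1) : hOutSigned Adj σ π ≤ 2 := by
  have hπ' : ∀ x, 0 ≤ π x := fun x => (hπ x).le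
  have hι : iotaInf Adj σ π univ ≤ ∑ x, π x :=
    calc iotaInf Adj σ π univ ≤ ∑ x ∈ frustratedSet Adj σ 1 univ, π x :=
          (iotaInf_le_frustration hπ' (τ := 1) (fun _ => Or.inl rfl) univ).trans
            (frustration_le_sum_frustratedSet hπ' hσ (fun _ => Or.inl rfl) univ)
      _ ≤ ∑ x, π x := sum_le_sum_of_subset_of_nonneg (filter_subset _ _) fun x _ _ => hπ' x
  have h := hOutSigned_mul_sum_le (Adj := Adj) (σ := σ) hπ univ_nonempty
  rw [outBd_univ, sum_empty, add_zero] at h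
  exact le_of_mul_le_mul_right (by linarith) (sum_pos (fun x _ => hπ x) univ_nonempty)

lemma hOutSigned_of_isEmpty [IsEmpty V] : hOutSigned Adj σ π = 0 := by
  rw [hOutSigned, ← Real.sInf_empty]
  congr
  exact Set.eq_empty_of_forall_notMem fun r ⟨U, ⟨x, _⟩, _⟩ => isEmptyElim x

lemma lamInf_of_isEmpty [IsEmpty V] : lamInf Adj σ π = 0 := by
  rw [lamInf, ← Real.sSup_univ]
  congr
  ext lam
  simp

lemma abs_sub_le_localGrad (f : V → ℝ) {x y : V} (hxy : Adj x y) :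
    |f x - σ x y * f y| ≤ localGrad Adj σ f x := by
  refine Real.abs_le_sqrt ?_
  rw [← sq_abs]
  calc |f x - σ x y * f y| ^ 2 = ⨆ _ : y ∈ {y : V | Adj x y}, |f x - σ x y * f y| ^ 2 :=
        (ciSup_pos (f := fun _ => |f x - σ x y * f y| ^ 2)
          (show y ∈ {y : V | Adj x y} from hxy)).symm
    _ ≤ _ := le_ciSup (f := fun z => ⨆ _ : z ∈ {y : V | Adj x y}, |f x - σ x z * f z| ^ 2)
        (Set.finite_range _).bddAbove y

lemma le_lamInf [Nonempty V] (hπ : ∀ x, 0 < π x) {c : ℝ}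
    (hc : ∀ f : V → ℝ, c * ∑ x, f x ^ 2 * π x ≤ ∑ x, localGrad Adj σ f x ^ 2 * π x) :
    c ≤ lamInf Adj σ π := by
  simp_rw [sq_localGrad] at hc
  refine le_csSup ⟨(∑ x, localGrad Adj σ 1 x ^ 2 * π x) / ∑ x, π x, fun lam hlam => ?_⟩ hc
  rw [le_div_iff₀ (sum_pos (fun x _ => hπ x) univ_nonempty)]
  simpa [sq_localGrad] using hlam 1

lemma abs_add_abs_le_localGrad (f : V → ℝ) {x y : V} (hxy : Adj x y)
    (hfr : σ x y * pmSign (f x) * pmSign (f y) = -1) : |f x| + |f y| ≤ localGrad Adj σ f x :=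
  (abs_add_abs_le_abs_sub hfr).trans (abs_sub_le_localGrad f hxy)

lemma abs_le_abs_add_localGrad (f : V → ℝ) {x y : V} (hyx : Adj y x)
    (hσ : σ y x = 1 ∨ σ y x = -1) : |f x| ≤ |f y| + localGrad Adj σ f y := by
  have hσf : |σ y x * f x| = |f x| := by rcases hσ with h | h <;> simp [h]
  linarith [abs_sub_le_localGrad (σ := σ) f hyx, abs_sub_abs_le_abs_sub (σ y x * f x) (f y),
    abs_sub_comm (f y) (σ y x * f x)]

end SignedGraph

section LevelSets

variable {V : Type*} [Fintype V] (f : V → ℝ)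

noncomputable def levels : Finset ℝ := (univ.image fun x => f x ^ 2).filter (0 < ·)

noncomputable def levelSet (t : ℝ) : Finset V := univ.filter fun x => t ≤ f x ^ 2

/-- Discrete stand-in for the Lebesgue measure of `{t > 0 | P t}`: it is exact when `P` is an
interval `(b, a]` with endpoints in `{0} ∪ levels f`. -/
noncomputable def levelWeight (P : ℝ → Prop) : ℝ :=
  ∑ t ∈ levels f with P t, (t - prevVal (levels f) t)

variable {f}

lemma pos_of_mem_levels {t : ℝ} (ht : t ∈ levels f) : 0 < t := (mem_filter.1 ht).2

lemma sq_mem_insert_levels (x : V) : f x ^ 2 ∈ insert 0 (levels f) := by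
  rcases (sq_nonneg (f x)).eq_or_lt with h | h
  · rw [← h]; exact mem_insert_self _ _
  · exact mem_insert_of_mem (mem_filter.2 ⟨mem_image_of_mem _ (mem_univ x), h⟩)

@[simp]
lemma mem_levelSet {t : ℝ} {x : V} : x ∈ levelSet f t ↔ t ≤ f x ^ 2 := by simp [levelSet]

lemma levelSet_nonempty {t : ℝ} (ht : t ∈ levels f) : (levelSet f t).Nonempty := by
  obtain ⟨x, -, rfl⟩ := mem_image.1 (mem_filter.1 ht).1
  exact ⟨x, mem_levelSet.2 le_rfl⟩

lemma levelWeight_mem_levelSet (x : V) : levelWeight f (fun t => x ∈ levelSet f t) = f x ^ 2 := by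
  simp only [levelWeight, mem_levelSet]
  exact sum_filter_le_sub_prevVal (fun _ => pos_of_mem_levels) (sq_mem_insert_levels x)

lemma levelWeight_le {P : ℝ → Prop} {b c : ℝ} (hb : b ∈ insert 0 (levels f)) (hbc : b ≤ c)
    (hP : ∀ t ∈ levels f, P t → b < t ∧ t ≤ c) : levelWeight f P ≤ c - b :=
  sum_filter_sub_prevVal_le (fun _ => pos_of_mem_levels) hb hbc hP

lemma sum_levels_mul_sum (B : ℝ → Finset V) (c : V → ℝ) :
    ∑ t ∈ levels f, (t - prevVal (levels f) t) * ∑ x ∈ B t, c x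
      = ∑ x, levelWeight f (fun t => x ∈ B t) * c x := by
  unfold levelWeight
  convert sum_mul_sum_eq_sum_sum_mul (levels f) _ B c

end LevelSets

section Coarea

variable {V : Type*} [Fintype V]

noncomputable def frustratedWeight (Adj : V → V → Prop) (σ : V → V → ℝ) (f : V → ℝ) (x : V) : ℝ :=
  levelWeight f fun t => x ∈ frustratedSet Adj σ (pmSign ∘ f) (levelSet f t)

noncomputable def boundaryWeight (Adj : V → V → Prop) (f : V → ℝ) (y : V) : ℝ :=
  levelWeight f fun t => y ∈ outBd Adj (levelSet f t)

variable {Adj : V → V → Prop} {σ : V → V → ℝ} {π : V → ℝ}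

theorem hOutSigned_mul_sum_sq_le (hπ : ∀ x, 0 < π x)
    (hσ : ∀ x y, Adj x y → σ x y = 1 ∨ σ x y = -1) (f : V → ℝ) :
    hOutSigned Adj σ π * ∑ x, f x ^ 2 * π x ≤
      ∑ x, (2 * frustratedWeight Adj σ f x + boundaryWeight Adj f x) * π x := by
  have hπ' : ∀ x, 0 ≤ π x := fun x => (hπ x).le
  have hτ : ∀ x, (pmSign ∘ f) x = 1 ∨ (pmSign ∘ f) x = -1 := fun x => pmSign_eq_one_or (f x)
  calc hOutSigned Adj σ π * ∑ x, f x ^ 2 * π x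
      = ∑ t ∈ levels f, (t - prevVal (levels f) t) *
          (hOutSigned Adj σ π * ∑ x ∈ levelSet f t, π x) := by
        simp_rw [← levelWeight_mem_levelSet (f := f), mul_left_comm _ (hOutSigned Adj σ π),
          ← mul_sum, sum_levels_mul_sum]
    _ ≤ ∑ t ∈ levels f, (t - prevVal (levels f) t) *
          (2 * ∑ x ∈ frustratedSet Adj σ (pmSign ∘ f) (levelSet f t), π x
            + ∑ y ∈ outBd Adj (levelSet f t), π y) := by
        refine sum_le_sum fun t ht => mul_le_mul_of_nonneg_left ?_
          (sub_pos.2 (prevVal_lt (pos_of_mem_levels ht))).le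
        have hι := (iotaInf_le_frustration (Adj := Adj) (σ := σ) hπ' hτ (levelSet f t)).trans
          (frustration_le_sum_frustratedSet hπ' hσ hτ (levelSet f t))
        linarith [hOutSigned_mul_sum_le (Adj := Adj) (σ := σ) hπ (levelSet_nonempty ht)]
    _ = _ := by
        simp_rw [frustratedWeight, boundaryWeight, mul_add, mul_left_comm _ (2 : ℝ),
          sum_add_distrib, ← mul_sum, sum_levels_mul_sum, add_mul, sum_add_distrib, mul_sum,
          mul_assoc]

lemma two_mul_frustratedWeight_le (f : V → ℝ) (x : V) {e : ℝ} (he0 : 0 ≤ e)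
    (he : e ≤ 3 / 4) :
    2 * e * frustratedWeight Adj σ f x ≤ (localGrad Adj σ f x - e * |f x|) ^ 2 := by
  by_cases haD : |f x| ≤ localGrad Adj σ f x
  · have hw : frustratedWeight Adj σ f x ≤ min (|f x| ^ 2) ((localGrad Adj σ f x - |f x|) ^ 2) := by
      refine (levelWeight_le (mem_insert_self 0 _) (le_min (sq_nonneg _) (sq_nonneg _))
        fun t ht hxt => ⟨pos_of_mem_levels ht, ?_⟩).trans_eq (sub_zero _)
      obtain ⟨hxU, y, hyU, hxy, hfr⟩ := mem_filter.1 hxt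
      rw [mem_levelSet] at hxU hyU
      refine le_min (sq_abs (f x) ▸ hxU) (hyU.trans ?_)
      rw [← sq_abs]
      exact pow_le_pow_left₀ (abs_nonneg _) (by linarith [abs_add_abs_le_localGrad f hxy hfr]) 2
    calc 2 * e * frustratedWeight Adj σ f x
        ≤ 2 * e * min (|f x| ^ 2) ((localGrad Adj σ f x - |f x|) ^ 2) :=
          mul_le_mul_of_nonneg_left hw (by positivity)
      _ ≤ _ := two_mul_min_sq_le_sq he0 he (abs_nonneg _) haD
  · have hw : frustratedWeight Adj σ f x ≤ 0 := by
      refine (levelWeight_le (mem_insert_self 0 _) le_rfl fun t _ hxt => ?_).trans_eq (sub_zero _)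
      obtain ⟨-, y, -, hxy, hfr⟩ := mem_filter.1 hxt
      exact absurd (abs_add_abs_le_localGrad f hxy hfr) (by linarith [abs_nonneg (f y)])
    nlinarith [sq_nonneg (localGrad Adj σ f x - e * |f x|)]

lemma boundaryWeight_le (hsymm : ∀ x y, Adj x y → Adj y x)
    (hσ : ∀ x y, Adj x y → σ x y = 1 ∨ σ x y = -1) (f : V → ℝ) (y : V) :
    boundaryWeight Adj f y ≤ 2 * |f y| * localGrad Adj σ f y + localGrad Adj σ f y ^ 2 := by
  have hD : 0 ≤ localGrad Adj σ f y := Real.sqrt_nonneg _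
  have hsq : f y ^ 2 ≤ (|f y| + localGrad Adj σ f y) ^ 2 := by
    rw [← sq_abs]; exact pow_le_pow_left₀ (abs_nonneg _) (le_add_of_nonneg_right hD) 2
  calc boundaryWeight Adj f y
      ≤ (|f y| + localGrad Adj σ f y) ^ 2 - f y ^ 2 := by
        refine levelWeight_le (sq_mem_insert_levels y) hsq fun t _ hyt => ?_
        obtain ⟨-, hyU, x, hxU, hxy⟩ := mem_filter.1 hyt
        rw [mem_levelSet] at hyU hxU
        refine ⟨not_le.1 hyU, hxU.trans ?_⟩
        rw [← sq_abs]
        exact pow_le_pow_left₀ (abs_nonneg _)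
          (abs_le_abs_add_localGrad f (hsymm x y hxy) (hσ y x (hsymm x y hxy))) 2
    _ = _ := by rw [← sq_abs (f y)]; ring

theorem mul_hOutSigned_mul_sum_sq_le (hπ : ∀ x, 0 < π x) (hsymm : ∀ x y, Adj x y → Adj y x)
    (hσ : ∀ x y, Adj x y → σ x y = 1 ∨ σ x y = -1) (f : V → ℝ) {e : ℝ} (he0 : 0 ≤ e)
    (he : e ≤ 3 / 4) :
    e * hOutSigned Adj σ π * ∑ x, f x ^ 2 * π x
      ≤ (1 + e) * ∑ x, localGrad Adj σ f x ^ 2 * π x + e ^ 2 * ∑ x, f x ^ 2 * π x := by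
  calc e * hOutSigned Adj σ π * ∑ x, f x ^ 2 * π x
      ≤ e * ∑ x, (2 * frustratedWeight Adj σ f x + boundaryWeight Adj f x) * π x := by
        rw [mul_assoc]; exact mul_le_mul_of_nonneg_left (hOutSigned_mul_sum_sq_le hπ hσ f) he0
    _ ≤ ∑ x, ((localGrad Adj σ f x - e * |f x|) ^ 2
          + e * (2 * |f x| * localGrad Adj σ f x + localGrad Adj σ f x ^ 2)) * π x := by
        rw [mul_sum]
        refine sum_le_sum fun x _ => ?_
        rw [← mul_assoc, mul_add, ← mul_assoc, mul_comm e 2]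
        exact mul_le_mul_of_nonneg_right (add_le_add
          (two_mul_frustratedWeight_le f x he0 he)
          (mul_le_mul_of_nonneg_left (boundaryWeight_le hsymm hσ f x) he0)) (hπ x).le
    _ = _ := by
        rw [mul_sum, mul_sum, ← sum_add_distrib]
        refine sum_congr rfl fun x _ => ?_
        rw [← sq_abs (f x)]
        ring

end Coarea

theorem lamInf_ge_of_hOutSigned_general {V : Type*} [Fintype V] (Adj : V → V → Prop)
    (σ : V → V → ℝ) (π : V → ℝ)
    (hπ : ∀ x : V, 0 < π x)
    (hsymm : ∀ x y : V, Adj x y → Adj y x)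
    (hσsign : ∀ x y : V, Adj x y → σ x y = 1 ∨ σ x y = -1) :
    lamInf Adj σ π ≥ (Real.sqrt (1 + hOutSigned Adj σ π) - 1) ^ 2 := by
  rcases isEmpty_or_nonempty V with hV | hV
  · rw [lamInf_of_isEmpty, hOutSigned_of_isEmpty]
    norm_num
  refine le_lamInf hπ fun f => ?_
  have hh : 0 ≤ hOutSigned Adj σ π := hOutSigned_nonneg fun x => (hπ x).le
  have h2 : hOutSigned Adj σ π ≤ 2 := hOutSigned_le_two hπ hσsign
  set s := √(1 + hOutSigned Adj σ π) with hs
  have hsq : s ^ 2 = 1 + hOutSigned Adj σ π := Real.sq_sqrt (by linarith)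
  have hs1 : 1 ≤ s := Real.one_le_sqrt.2 (by linarith)
  have hs2 : s ≤ 7 / 4 := by rw [hs, Real.sqrt_le_left (by norm_num)]; linarith
  have key := mul_hOutSigned_mul_sum_sq_le hπ hsymm hσsign f (e := s - 1) (by linarith)
    (by linarith)
  rw [show hOutSigned Adj σ π = (s - 1) ^ 2 + 2 * (s - 1) by linear_combination -hsq] at key
  refine le_of_mul_le_mul_left ?_ (by linarith : 0 < s)
  linarith

/-- For a finite signed graph with an arbitrary positive vertex measure `π`,
`λ_∞^σ ≥ (√(1 + h_out^σ) − 1)²`. -/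
theorem lamInf_ge_of_hOutSigned {V : Type*} [Fintype V] (Adj : V → V → Prop)
    (σ : V → V → ℝ) (π : V → ℝ)
    (hπ : ∀ x : V, 0 < π x)
    (hsymm : ∀ x y : V, Adj x y → Adj y x)
    (hσsymm : ∀ x y : V, σ x y = σ y x)
    (hσsign : ∀ x y : V, Adj x y → σ x y = 1 ∨ σ x y = -1) :
    lamInf Adj σ π ≥ (Real.sqrt (1 + hOutSigned Adj σ π) - 1) ^ 2 :=
  lamInf_ge_of_hOutSigned_general Adj σ π hπ hsymm hσsign
end

section
/- For t ∈ [0,1], define Y_t : [−1,1] → {+1,−1,0} by Y_t(z) = z/|z| if |z| ≥ t and Y_t(z) = 0 if |z| < t, with the convention z/|z| = 1 when z = 0. Then for all z₁, z₂ ∈ [−1,1], ∫₀¹ |Y_{√t}(z₁) − Y_{√t}(z₂)| dt ≤ |z₁ − z₂|·(|z₁| + |z₂|). -/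
/-!
`Y_{√t}(z)` is the sign of `z` (with sign `1` at `0`) for `t ≤ z²` and `0` beyond. If `z₁` and `z₂`
have the same sign, the integrand is therefore the indicator of the interval between `z₁²` and
`z₂²`, of length `|z₁ - z₂| |z₁ + z₂|`. Otherwise it is `1_{t ≤ z₁²} + 1_{t ≤ z₂²}`, whose integral
is at most `z₁² + z₂² ≤ (|z₁| + |z₂|)² = |z₁ - z₂| (|z₁| + |z₂|)`.
-/

/-- For `t ∈ [0,1]`, the indicator-type function `Y_t : [-1,1] → {+1,-1,0}`, with
`Y_t(z) = z/|z|` if `|z| ≥ t` (where `z/|z| = 1` when `z = 0`), and `Y_t(z) = 0` if `|z| < t`. -/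
noncomputable def Yind (t z : ℝ) : ℝ :=
  if t ≤ |z| then (if z = 0 then 1 else z / |z|) else 0

open Set MeasureTheory
open scoped Interval

lemma intervalIntegral_indicator_one {a b : ℝ} (hab : a ≤ b) {s : Set ℝ} (hs : MeasurableSet s) :
    ∫ t in a..b, s.indicator 1 t = volume.real (s ∩ Ioc a b) := by
  rw [intervalIntegral.integral_of_le hab, integral_indicator_one hs,
    measureReal_restrict_apply hs]

lemma intervalIntegral_indicator_one_Iic_le {c : ℝ} (hc : 0 ≤ c) :
    ∫ t in (0 : ℝ)..1, (Iic c).indicator 1 t ≤ c := by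
  rw [intervalIntegral_indicator_one zero_le_one measurableSet_Iic]
  calc volume.real (Iic c ∩ Ioc 0 1) ≤ volume.real (Ioc 0 c) :=
        measureReal_mono (fun t ht ↦ ⟨ht.2.1, ht.1⟩) measure_Ioc_lt_top.ne
    _ = c := by rw [Real.volume_real_Ioc_of_le hc, sub_zero]

lemma intervalIntegral_indicator_one_uIoc_le (a b : ℝ) :
    ∫ t in (0 : ℝ)..1, (Ι a b).indicator 1 t ≤ |b - a| := by
  rw [intervalIntegral_indicator_one zero_le_one measurableSet_uIoc]
  calc volume.real (Ι a b ∩ Ioc 0 1) ≤ volume.real (Ι a b) :=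
        measureReal_mono inter_subset_left measure_Ioc_lt_top.ne
    _ = |b - a| := by
      rw [measureReal_def, Real.volume_uIoc, ENNReal.toReal_ofReal (abs_nonneg _)]

lemma abs_indicator_one_Iic_sub_indicator_one_Iic (a b t : ℝ) :
    |(Iic a).indicator (1 : ℝ → ℝ) t - (Iic b).indicator 1 t| = (Ι a b).indicator 1 t := by
  simp only [indicator_apply, mem_Iic, uIoc, mem_Ioc, Pi.one_apply]
  split_ifs <;> grind

lemma sqrt_le_abs_iff_le_sq (t z : ℝ) : √t ≤ |z| ↔ t ≤ z ^ 2 := by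
  rw [← Real.sqrt_sq_eq_abs, Real.sqrt_le_sqrt_iff (sq_nonneg z)]

lemma Yind_sqrt_of_nonneg {z : ℝ} (hz : 0 ≤ z) (t : ℝ) :
    Yind √t z = (Iic (z ^ 2)).indicator 1 t := by
  simp only [Yind, sqrt_le_abs_iff_le_sq]
  rcases hz.eq_or_lt with rfl | hz
  · simp [indicator_apply]
  · simp [indicator_apply, hz.ne', abs_of_pos hz]

lemma Yind_sqrt_of_neg {z : ℝ} (hz : z < 0) (t : ℝ) :
    Yind √t z = -(Iic (z ^ 2)).indicator 1 t := by
  simp only [Yind, sqrt_le_abs_iff_le_sq]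
  by_cases h : t ≤ z ^ 2 <;> simp [h, hz.ne, abs_of_neg hz]

lemma abs_Yind_sqrt_sub_of_iff {z₁ z₂ : ℝ} (h : 0 ≤ z₁ ↔ 0 ≤ z₂) (t : ℝ) :
    |Yind √t z₁ - Yind √t z₂| = (Ι (z₁ ^ 2) (z₂ ^ 2)).indicator 1 t := by
  by_cases hz₁ : 0 ≤ z₁
  · rw [Yind_sqrt_of_nonneg hz₁, Yind_sqrt_of_nonneg (h.1 hz₁),
      abs_indicator_one_Iic_sub_indicator_one_Iic]
  · have hz₂ : z₂ < 0 := not_le.1 (mt h.2 hz₁)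
    rw [Yind_sqrt_of_neg (not_le.1 hz₁), Yind_sqrt_of_neg hz₂, neg_sub_neg, abs_sub_comm,
      abs_indicator_one_Iic_sub_indicator_one_Iic, uIoc_comm]

lemma abs_Yind_sqrt_sub_of_not_iff {z₁ z₂ : ℝ} (h : ¬(0 ≤ z₁ ↔ 0 ≤ z₂)) (t : ℝ) :
    |Yind √t z₁ - Yind √t z₂| = (Iic (z₁ ^ 2)).indicator 1 t + (Iic (z₂ ^ 2)).indicator 1 t := by
  have hsum_nonneg : 0 ≤ (Iic (z₁ ^ 2)).indicator (1 : ℝ → ℝ) t + (Iic (z₂ ^ 2)).indicator 1 t :=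
    add_nonneg (indicator_nonneg (fun _ _ ↦ zero_le_one) _)
      (indicator_nonneg (fun _ _ ↦ zero_le_one) _)
  rcases le_or_gt 0 z₁ with hz₁ | hz₁
  · have hz₂ : z₂ < 0 := not_le.1 fun hz₂ ↦ h (iff_of_true hz₁ hz₂)
    rw [Yind_sqrt_of_nonneg hz₁, Yind_sqrt_of_neg hz₂, sub_neg_eq_add, abs_of_nonneg hsum_nonneg]
  · have hz₂ : 0 ≤ z₂ := not_lt.1 fun hz₂ ↦ h (iff_of_false hz₁.not_ge hz₂.not_ge)
    rw [Yind_sqrt_of_neg hz₁, Yind_sqrt_of_nonneg hz₂, ← neg_add', abs_neg,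
      abs_of_nonneg hsum_nonneg]

lemma integral_abs_Yind_sqrt_sub_le_of_iff {z₁ z₂ : ℝ} (h : 0 ≤ z₁ ↔ 0 ≤ z₂) :
    ∫ t in (0 : ℝ)..1, |Yind √t z₁ - Yind √t z₂| ≤ |z₂ ^ 2 - z₁ ^ 2| := by
  simp only [abs_Yind_sqrt_sub_of_iff h]
  exact intervalIntegral_indicator_one_uIoc_le _ _

lemma integral_abs_Yind_sqrt_sub_le_of_not_iff {z₁ z₂ : ℝ} (h : ¬(0 ≤ z₁ ↔ 0 ≤ z₂)) :
    ∫ t in (0 : ℝ)..1, |Yind √t z₁ - Yind √t z₂| ≤ z₁ ^ 2 + z₂ ^ 2 := by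
  have hintegrable (c : ℝ) : IntervalIntegrable ((Iic c).indicator (1 : ℝ → ℝ)) volume 0 1 := by
    rw [intervalIntegrable_iff]
    exact (integrableOn_const measure_Ioc_lt_top.ne).indicator measurableSet_Iic
  simp only [abs_Yind_sqrt_sub_of_not_iff h]
  rw [intervalIntegral.integral_add (hintegrable _) (hintegrable _)]
  exact add_le_add (intervalIntegral_indicator_one_Iic_le (sq_nonneg _))
    (intervalIntegral_indicator_one_Iic_le (sq_nonneg _))

lemma abs_sq_sub_sq_le (x y : ℝ) : |x ^ 2 - y ^ 2| ≤ |x - y| * (|x| + |y|) := by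
  rw [sq_sub_sq, abs_mul, mul_comm]
  exact mul_le_mul_of_nonneg_left (abs_add_le x y) (abs_nonneg _)

lemma abs_sub_eq_abs_add_abs_of_mul_nonpos {x y : ℝ} (h : x * y ≤ 0) : |x - y| = |x| + |y| := by
  rw [← abs_neg y, sub_eq_add_neg, abs_add_eq_add_abs_iff, neg_nonneg, neg_nonpos]
  exact mul_nonpos_iff.1 h

lemma sq_add_sq_le_of_mul_nonpos {x y : ℝ} (h : x * y ≤ 0) :
    x ^ 2 + y ^ 2 ≤ |x - y| * (|x| + |y|) := by
  rw [abs_sub_eq_abs_add_abs_of_mul_nonpos h, ← sq_abs x, ← sq_abs y]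
  nlinarith [abs_nonneg x, abs_nonneg y]

theorem integral_Yind_le_general (z₁ z₂ : ℝ) :
    ∫ t in (0 : ℝ)..1, |Yind (Real.sqrt t) z₁ - Yind (Real.sqrt t) z₂| ≤
      |z₁ - z₂| * (|z₁| + |z₂|) := by
  by_cases h : 0 ≤ z₁ ↔ 0 ≤ z₂
  · calc _ ≤ |z₂ ^ 2 - z₁ ^ 2| := integral_abs_Yind_sqrt_sub_le_of_iff h
      _ ≤ |z₁ - z₂| * (|z₁| + |z₂|) := (abs_sub_comm _ _).trans_le (abs_sq_sub_sq_le z₁ z₂)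
  · have hopp : z₁ * z₂ ≤ 0 := by
      rw [mul_nonpos_iff]
      grind
    exact (integral_abs_Yind_sqrt_sub_le_of_not_iff h).trans (sq_add_sq_le_of_mul_nonpos hopp)

/-- Lemma of Atay–Liu: for any `z₁, z₂ ∈ [-1,1]`,
`∫₀¹ |Y_{√t}(z₁) − Y_{√t}(z₂)| dt ≤ |z₁ − z₂| (|z₁| + |z₂|)`. -/
theorem integral_Yind_le (z₁ z₂ : ℝ) (h₁ : z₁ ∈ Set.Icc (-1 : ℝ) 1)
    (h₂ : z₂ ∈ Set.Icc (-1 : ℝ) 1) :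
    ∫ t in (0 : ℝ)..1, |Yind (Real.sqrt t) z₁ - Yind (Real.sqrt t) z₂| ≤
      |z₁ - z₂| * (|z₁| + |z₂|) :=
  integral_Yind_le_general z₁ z₂
end

section
/- Let G = (V,E) be a d-regular finite graph with N = |V| vertices, and let t₁ be the smallest eigenvalue of its normalized adjacency matrix (1/d)A. Then 1 + t₁ ≥ (√(1 + β_out) − 1)²/(2d), where β_out is the outer vertex bipartiteness constant of G. -/
attribute [local instance] Classical.propDecidable

/-!
For a function `f` and a threshold `θ > 0` the sets `{f ≤ -θ}` and `{f ≥ θ}` are disjoint, so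
`β_out` bounds the ratio of `I(L) + I(R) + |∂_out(L ∪ R)|` to `|L ∪ R|` from below. Integrating
over `θ` against `d(θ²)` (discretely, along the sorted values of `|f|`), the denominators integrate
to `∑ f²`, while each vertex `x` contributes to the numerators at most
`∑_{y ∼ x} (f x + f y)² + 2 |f x| (max_{y ∼ x} |f y| - |f x|)₊`; by Cauchy–Schwarz the boundary
terms total at most `√(∑ f² · Q)`, where `Q = ∑_x ∑_{y ∼ x} (f x + f y)²`. Hence
`β_out ∑ f² ≤ Q + 2 √(∑ f² · Q)`. For an eigenvector of `A / d` with eigenvalue `r` one has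
`Q = 2d(1 + r) ∑ f²`, so `β_out ≤ q + 2√q` with `q = 2d(1 + r)`, i.e. `(√(1 + β_out) - 1)² ≤ q`.
-/

open Finset

theorem Finset.exists_strictMonoOn_enum {α : Type*} [LinearOrder α] (s : Finset α)
    (hs : s.Nonempty) :
    ∃ (n : ℕ) (v : ℕ → α), StrictMonoOn v (Set.Iic n) ∧ v 0 = s.min' hs ∧
      ∀ a ∈ s, ∃ k ≤ n, v k = a := by
  have hpos : 0 < #s := hs.card_pos
  set e := s.orderEmbOfFin rfl
  refine ⟨#s - 1, fun i => e ⟨min i (#s - 1), by omega⟩, ?_, ?_, ?_⟩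
  · intro i hi j hj hij
    simp only [Set.mem_Iic] at hi hj
    exact e.strictMono (by simp only [Fin.mk_lt_mk]; omega)
  · exact Finset.orderEmbOfFin_zero rfl hpos
  · intro a ha
    obtain ⟨⟨k, hk⟩, rfl⟩ : a ∈ Set.range e := by rwa [Finset.range_orderEmbOfFin]
    exact ⟨k, by omega, by simp only [Nat.min_eq_left (show k ≤ #s - 1 by omega)]⟩

section LayerCake

variable {n : ℕ} {v : ℕ → ℝ}

theorem sum_range_filter_sq_sub_sq (hv : StrictMonoOn v (Set.Iic n)) (hv0 : v 0 = 0) {a : ℝ}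
    (ha : ∃ k ≤ n, v k = |a|) :
    ∑ i ∈ range n with v (i + 1) ≤ a, (v (i + 1) ^ 2 - v i ^ 2) = max a 0 ^ 2 := by
  rcases le_or_gt a 0 with ha0 | ha0
  · rw [max_eq_right ha0, filter_false_of_mem, sum_empty, sq, zero_mul]
    intro i hi
    have : v 0 < v (i + 1) := hv (by simp) (by simpa using hi) (by omega)
    linarith
  · obtain ⟨k, hk, hka⟩ := ha
    rw [abs_of_pos ha0] at hka
    subst hka
    have hfilter : {i ∈ range n | v (i + 1) ≤ v k} = range k := by
      ext i
      simp only [mem_filter, mem_range]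
      constructor
      · rintro ⟨hi, h⟩
        have := (hv.le_iff_le (by simp; omega) (by simpa)).1 h
        omega
      · intro hi
        exact ⟨by omega, (hv.le_iff_le (by simp; omega) (by simpa)).2 (by omega)⟩
    rw [hfilter, sum_range_sub (fun i => v i ^ 2), hv0, max_eq_left ha0.le]
    ring

theorem sum_range_sq_sub_sq_mul_card_filter {V : Type*} [Fintype V]
    (hv : StrictMonoOn v (Set.Iic n)) (hv0 : v 0 = 0) (a : V → ℝ) (ha : ∀ x, ∃ k ≤ n, v k = |a x|) :
    ∑ i ∈ range n, (v (i + 1) ^ 2 - v i ^ 2) * (#{x | v (i + 1) ≤ a x} : ℝ) =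
      ∑ x, max (a x) 0 ^ 2 := by
  simp_rw [natCast_card_filter, mul_sum, mul_ite, mul_one, mul_zero]
  rw [sum_comm]
  refine sum_congr rfl fun x _ => ?_
  rw [← sum_filter]
  exact sum_range_filter_sq_sub_sq hv hv0 (ha x)

end LayerCake

section VertexBound

variable {ι : Type*} {s : Finset ι} (hs : s.Nonempty) (g : ι → ℝ)

theorem sq_max_sub_abs_le_sum_sq (a : ℝ) :
    max (s.sup' hs (fun y => |g y|) - |a|) 0 ^ 2 ≤ ∑ y ∈ s, (a + g y) ^ 2 := by
  obtain ⟨y₀, hy₀, hM⟩ := exists_mem_eq_sup' hs fun y => |g y|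
  have hy₀_le : max (|g y₀| - |a|) 0 ≤ |a + g y₀| := by
    refine max_le ?_ (abs_nonneg _)
    simpa [add_comm] using abs_sub_abs_le_abs_sub (g y₀) (-a)
  calc max (s.sup' hs (fun y => |g y|) - |a|) 0 ^ 2 ≤ (a + g y₀) ^ 2 := by
        rw [hM, ← sq_abs (a + g y₀)]
        exact pow_le_pow_left₀ (le_max_right _ _) hy₀_le 2
    _ ≤ ∑ y ∈ s, (a + g y) ^ 2 :=
        single_le_sum (f := fun y => (a + g y) ^ 2) (fun y _ => sq_nonneg _) hy₀

theorem sweep_vertex_bound_of_nonneg {a : ℝ} (ha : 0 ≤ a) :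
    max (min a (s.sup' hs g)) 0 ^ 2 +
        (s.sup' hs (fun y => |g y|) ^ 2 - min a (s.sup' hs fun y => |g y|) ^ 2) ≤
      ∑ y ∈ s, (a + g y) ^ 2 + 2 * a * max (s.sup' hs (fun y => |g y|) - a) 0 := by
  set P := s.sup' hs g
  set M := s.sup' hs fun y => |g y|
  obtain ⟨y₀, hy₀, hM⟩ : ∃ y ∈ s, M = |g y| := exists_mem_eq_sup' hs _
  obtain ⟨y₁, hy₁, hP⟩ : ∃ y ∈ s, P = g y := exists_mem_eq_sup' hs g
  have hPM : P ≤ M := sup'_le hs g fun y hy => (le_abs_self _).trans (le_sup' (fun y => |g y|) hy)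
  have hterm : ∀ y ∈ s, (a + g y) ^ 2 ≤ ∑ y ∈ s, (a + g y) ^ 2 :=
    fun y hy => single_le_sum (fun y _ => sq_nonneg (a + g y)) hy
  have hmax : 0 ≤ 2 * a * max (M - a) 0 := by positivity
  rcases le_total 0 (g y₀) with hg₀ | hg₀
  · -- the largest `|g y|` is attained at a nonnegative value, so everything is bounded by `M²`
    rw [abs_of_nonneg hg₀] at hM
    have hB : max (min a P) 0 ≤ min a M :=
      max_le (min_le_min_left a hPM) (le_min ha (hM ▸ hg₀))
    have := hterm y₀ hy₀
    nlinarith [min_le_left a M, min_le_right a M, le_max_right (min a P) 0]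
  · -- otherwise `M = -g y₀`, and a positive `P` is attained at a different vertex
    rw [abs_of_nonpos hg₀] at hM
    have hC : M ^ 2 - min a M ^ 2 ≤ (a + g y₀) ^ 2 + 2 * a * max (M - a) 0 := by
      rcases le_total a M with h | h
      · rw [min_eq_left h, max_eq_left (by linarith), hM]
        nlinarith
      · rw [min_eq_right h, sub_self]
        positivity
    rcases le_or_gt P 0 with hP0 | hP0
    · rw [max_eq_right ((min_le_right a P).trans hP0)]
      nlinarith [hterm y₀ hy₀]
    · have hne : y₁ ≠ y₀ := by rintro rfl; linarith
      have hB : max (min a P) 0 ^ 2 ≤ (a + g y₁) ^ 2 := by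
        rw [← hP, max_eq_left (le_min ha hP0.le)]
        nlinarith [min_le_left a P, min_le_right a P, le_min ha hP0.le]
      have := add_le_sum (fun y _ => sq_nonneg (a + g y)) hy₁ hy₀ hne
      linarith

theorem sweep_vertex_bound (a : ℝ) :
    max (min (-a) (s.sup' hs fun y => -g y)) 0 ^ 2 + max (min a (s.sup' hs g)) 0 ^ 2 +
        (s.sup' hs (fun y => |g y|) ^ 2 - min |a| (s.sup' hs fun y => |g y|) ^ 2) ≤
      ∑ y ∈ s, (a + g y) ^ 2 + 2 * |a| * max (s.sup' hs (fun y => |g y|) - |a|) 0 := by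
  rcases le_total 0 a with ha | ha
  · have h₀ : max (min (-a) (s.sup' hs fun y => -g y)) 0 = 0 :=
      max_eq_right ((min_le_left _ _).trans (by linarith))
    rw [h₀, abs_of_nonneg ha]
    linarith [sweep_vertex_bound_of_nonneg hs g ha]
  · have h₀ : max (min a (s.sup' hs g)) 0 = 0 := max_eq_right ((min_le_left _ _).trans ha)
    have := sweep_vertex_bound_of_nonneg hs (fun y => -g y) (neg_nonneg.2 ha)
    simp only [abs_neg, ← neg_add, neg_sq] at this
    rw [h₀, abs_of_nonpos ha]
    linarith

end VertexBound

section Graph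

variable {V : Type*} [Fintype V] (Adj : V → V → Prop)

noncomputable def nbrs (x : V) : Finset V := univ.filter fun y => Adj x y

theorem mem_nbrs {x y : V} : y ∈ nbrs Adj x ↔ Adj x y := by simp [nbrs]

theorem betaOut_nonneg : 0 ≤ betaOut Adj :=
  Real.sInf_nonneg (by rintro _ ⟨L, R, -, -, rfl⟩; positivity)

theorem betaOut_mul_card_le {L R : Finset V} (hLR : Disjoint L R) :
    betaOut Adj * #(L ∪ R) ≤ II Adj L + II Adj R + #(outBd Adj (L ∪ R)) := by
  rcases (L ∪ R).eq_empty_or_nonempty with h | h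
  · rw [h, card_empty, Nat.cast_zero, mul_zero]
    positivity
  · rw [← le_div_iff₀ (by exact_mod_cast h.card_pos)]
    exact csInf_le ⟨0, by rintro _ ⟨L, R, -, -, rfl⟩; positivity⟩ ⟨L, R, hLR, h, rfl⟩

noncomputable def sweepNeg (f : V → ℝ) (θ : ℝ) : Finset V := univ.filter fun x => f x ≤ -θ

noncomputable def signlessEnergy (f : V → ℝ) : ℝ :=
  ∑ x, ∑ y ∈ nbrs Adj x, (f x + f y) ^ 2

variable {Adj} (hN : ∀ x, (nbrs Adj x).Nonempty) (f : V → ℝ) (θ : ℝ)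

theorem sum_sum_nbrs_comm (hsymm : ∀ x y : V, Adj x y → Adj y x) (g : V → V → ℝ) :
    ∑ x, ∑ y ∈ nbrs Adj x, g x y = ∑ y, ∑ x ∈ nbrs Adj y, g x y :=
  sum_comm' fun x y => by
    simp only [mem_univ, mem_nbrs, true_and, and_true]
    exact ⟨hsymm x y, hsymm y x⟩

theorem disjoint_sweepNeg (hθ : 0 < θ) : Disjoint (sweepNeg f θ) (sweepNeg (-f) θ) := by
  simp only [sweepNeg, disjoint_filter, Pi.neg_apply]
  intro x _ h
  linarith

theorem sweepNeg_union_sweepNeg_neg :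
    sweepNeg f θ ∪ sweepNeg (-f) θ = univ.filter fun x => θ ≤ |f x| := by
  ext x
  simp only [sweepNeg, mem_union, mem_filter, mem_univ, true_and, Pi.neg_apply, le_abs]
  constructor <;> rintro (h | h) <;> [right; left; right; left] <;> linarith

theorem II_sweepNeg :
    II Adj (sweepNeg f θ) =
      #{x | θ ≤ min (-f x) ((nbrs Adj x).sup' (hN x) fun y => -f y)} := by
  rw [II, sweepNeg, filter_filter]
  congr 1
  ext x
  simp only [mem_filter, mem_univ, true_and, le_min_iff, le_sup'_iff, mem_nbrs]
  constructor
  · rintro ⟨hx, y, hy, hxy⟩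
    exact ⟨by linarith, y, hxy, by linarith⟩
  · rintro ⟨hx, y, hxy, hy⟩
    exact ⟨by linarith, y, by linarith, hxy⟩

theorem card_outBd_sweepNeg (hsymm : ∀ x y : V, Adj x y → Adj y x) :
    (#(outBd Adj (sweepNeg f θ ∪ sweepNeg (-f) θ)) : ℝ) =
      #{x | θ ≤ (nbrs Adj x).sup' (hN x) fun y => |f y|} -
        #{x | θ ≤ min |f x| ((nbrs Adj x).sup' (hN x) fun y => |f y|)} := by
  set M := fun x => (nbrs Adj x).sup' (hN x) fun y => |f y|
  have hsplit := card_filter_add_card_filter_not (s := univ.filter fun x => θ ≤ M x)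
    (fun x => θ ≤ |f x|)
  rw [filter_filter, filter_filter] at hsplit
  have hbd : outBd Adj (sweepNeg f θ ∪ sweepNeg (-f) θ) =
      univ.filter fun x => θ ≤ M x ∧ ¬θ ≤ |f x| := by
    ext x
    simp only [outBd, sweepNeg_union_sweepNeg_neg, M, mem_filter, mem_univ, true_and, le_sup'_iff,
      mem_nbrs]
    exact ⟨fun ⟨hx, y, hy, hyx⟩ => ⟨⟨y, hsymm y x hyx, hy⟩, hx⟩,
      fun ⟨⟨y, hxy, hy⟩, hx⟩ => ⟨hx, y, hy, hsymm x y hxy⟩⟩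
  have hmin : #{x | θ ≤ M x ∧ θ ≤ |f x|} = #{x | θ ≤ min |f x| (M x)} := by
    simp only [le_min_iff, and_comm]
  rw [hbd, ← hsplit, hmin]
  push_cast
  ring

end Graph

section Sweep

variable {V : Type*} [Fintype V] {Adj : V → V → Prop}

theorem sum_mul_sweep_numerator_eq (hsymm : ∀ x y : V, Adj x y → Adj y x)
    (hN : ∀ x, (nbrs Adj x).Nonempty) (f : V → ℝ) {n : ℕ} {v : ℕ → ℝ}
    (hv : StrictMonoOn v (Set.Iic n)) (hv0 : v 0 = 0) (hlev : ∀ x, ∃ k ≤ n, v k = |f x|) :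
    ∑ i ∈ range n, (v (i + 1) ^ 2 - v i ^ 2) *
        (II Adj (sweepNeg f (v (i + 1))) + II Adj (sweepNeg (-f) (v (i + 1))) +
          #(outBd Adj (sweepNeg f (v (i + 1)) ∪ sweepNeg (-f) (v (i + 1)))) : ℝ) =
      ∑ x, (max (min (-f x) ((nbrs Adj x).sup' (hN x) fun y => -f y)) 0 ^ 2 +
        max (min (f x) ((nbrs Adj x).sup' (hN x) f)) 0 ^ 2 +
        (((nbrs Adj x).sup' (hN x) fun y => |f y|) ^ 2 -
          min |f x| ((nbrs Adj x).sup' (hN x) fun y => |f y|) ^ 2)) := by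
  set P : ℝ → Prop := fun a => ∃ k ≤ n, v k = |a|
  have hP_min : ∀ a b, P a → P b → P (min a b) := fun a b ha hb => by
    rcases min_choice a b with h | h <;> rw [h] <;> assumption
  have hP_sup : ∀ x (g : V → ℝ), (∀ y, P (g y)) → P ((nbrs Adj x).sup' (hN x) g) := by
    intro x g hg
    obtain ⟨y, -, hy⟩ := exists_mem_eq_sup' (hN x) g
    exact hy ▸ hg y
  have hP_neg : ∀ x, P (-f x) := fun x => by simpa [P] using hlev x
  have hP_abs : ∀ x, P |f x| := fun x => by simpa [P] using hlev x
  have hM_nonneg : ∀ x, 0 ≤ (nbrs Adj x).sup' (hN x) fun y => |f y| := fun x =>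
    (abs_nonneg _).trans (le_sup' (fun y => |f y|) (hN x).choose_spec)
  simp only [II_sweepNeg hN, card_outBd_sweepNeg hN f _ hsymm, Pi.neg_apply, neg_neg]
  simp only [mul_add, mul_sub, sum_add_distrib, sum_sub_distrib]
  rw [sum_range_sq_sub_sq_mul_card_filter hv hv0 _ fun x =>
      hP_min _ _ (hP_neg x) (hP_sup x _ hP_neg),
    sum_range_sq_sub_sq_mul_card_filter hv hv0 _ fun x => hP_min _ _ (hlev x) (hP_sup x _ hlev),
    sum_range_sq_sub_sq_mul_card_filter hv hv0 _ fun x => hP_sup x _ hP_abs,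
    sum_range_sq_sub_sq_mul_card_filter hv hv0 _ fun x =>
      hP_min _ _ (hP_abs x) (hP_sup x _ hP_abs)]
  simp only [max_eq_left (hM_nonneg _), max_eq_left (le_min (abs_nonneg _) (hM_nonneg _))]

theorem betaOut_mul_sum_sq_le (hsymm : ∀ x y : V, Adj x y → Adj y x)
    (hN : ∀ x, (nbrs Adj x).Nonempty) (f : V → ℝ) :
    betaOut Adj * ∑ x, f x ^ 2 ≤
      signlessEnergy Adj f + 2 * √((∑ x, f x ^ 2) * signlessEnergy Adj f) := by
  obtain ⟨n, v, hv, hv0, hlev⟩ :=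
    (insert 0 (univ.image fun x => |f x|)).exists_strictMonoOn_enum (insert_nonempty _ _)
  replace hv0 : v 0 = 0 := by
    rw [hv0]
    refine le_antisymm (min'_le _ _ (mem_insert_self _ _)) (le_min' _ _ _ fun a ha => ?_)
    obtain rfl | ⟨x, -, rfl⟩ := by simpa only [mem_insert, mem_image] using ha
    exacts [le_rfl, abs_nonneg _]
  have hlev_f : ∀ x, ∃ k ≤ n, v k = |f x| := fun x => hlev _ (by simp)
  have hv_pos : ∀ i ∈ range n, 0 < v (i + 1) := fun i hi =>
    hv0 ▸ hv (by simp) (by simpa using hi) (by omega)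
  have hw : ∀ i ∈ range n, 0 ≤ v (i + 1) ^ 2 - v i ^ 2 := by
    intro i hi
    have h₀ : v 0 ≤ v i := hv.monotoneOn (by simp) (by simp at hi ⊢; omega) (by omega)
    have h₁ : v i < v (i + 1) := hv (by simp at hi ⊢; omega) (by simpa using hi) (by omega)
    nlinarith
  have hden : ∑ i ∈ range n, (v (i + 1) ^ 2 - v i ^ 2) *
      (#(sweepNeg f (v (i + 1)) ∪ sweepNeg (-f) (v (i + 1))) : ℝ) = ∑ x, f x ^ 2 := by
    simp only [sweepNeg_union_sweepNeg_neg]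
    rw [sum_range_sq_sub_sq_mul_card_filter hv hv0 _ fun x => by simpa using hlev_f x]
    exact sum_congr rfl fun x _ => by rw [max_eq_left (abs_nonneg (f x)), sq_abs]
  set M := fun x => (nbrs Adj x).sup' (hN x) fun y => |f y|
  have hCS : ∑ x, |f x| * max (M x - |f x|) 0 ≤
      √((∑ x, f x ^ 2) * signlessEnergy Adj f) := by
    calc ∑ x, |f x| * max (M x - |f x|) 0
        ≤ √(∑ x, |f x| ^ 2) * √(∑ x, max (M x - |f x|) 0 ^ 2) :=
          Real.sum_mul_le_sqrt_mul_sqrt _ _ _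
      _ ≤ √(∑ x, f x ^ 2) * √(signlessEnergy Adj f) := by
          simp only [sq_abs]
          exact mul_le_mul_of_nonneg_left (Real.sqrt_le_sqrt (sum_le_sum fun x _ =>
            sq_max_sub_abs_le_sum_sq (hN x) f (f x))) (Real.sqrt_nonneg _)
      _ = √((∑ x, f x ^ 2) * signlessEnergy Adj f) :=
          (Real.sqrt_mul (sum_nonneg fun x _ => sq_nonneg _) _).symm
  calc betaOut Adj * ∑ x, f x ^ 2
      = ∑ i ∈ range n, (v (i + 1) ^ 2 - v i ^ 2) *
          (betaOut Adj * #(sweepNeg f (v (i + 1)) ∪ sweepNeg (-f) (v (i + 1)))) := by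
        rw [← hden, mul_sum]
        exact sum_congr rfl fun i _ => by ring
    _ ≤ ∑ i ∈ range n, (v (i + 1) ^ 2 - v i ^ 2) *
          (II Adj (sweepNeg f (v (i + 1))) + II Adj (sweepNeg (-f) (v (i + 1))) +
            #(outBd Adj (sweepNeg f (v (i + 1)) ∪ sweepNeg (-f) (v (i + 1)))) : ℝ) :=
        sum_le_sum fun i hi => mul_le_mul_of_nonneg_left
          (betaOut_mul_card_le Adj (disjoint_sweepNeg f _ (hv_pos i hi))) (hw i hi)
    _ = ∑ x, (max (min (-f x) ((nbrs Adj x).sup' (hN x) fun y => -f y)) 0 ^ 2 +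
          max (min (f x) ((nbrs Adj x).sup' (hN x) f)) 0 ^ 2 + (M x ^ 2 - min |f x| (M x) ^ 2)) :=
        sum_mul_sweep_numerator_eq hsymm hN f hv hv0 hlev_f
    _ ≤ ∑ x, (∑ y ∈ nbrs Adj x, (f x + f y) ^ 2 + 2 * |f x| * max (M x - |f x|) 0) :=
        sum_le_sum fun x _ => sweep_vertex_bound (hN x) f (f x)
    _ = signlessEnergy Adj f + 2 * ∑ x, |f x| * max (M x - |f x|) 0 := by
        rw [sum_add_distrib, mul_sum, signlessEnergy]
        simp only [mul_assoc]
    _ ≤ signlessEnergy Adj f + 2 * √((∑ x, f x ^ 2) * signlessEnergy Adj f) := by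
        linarith

end Sweep

theorem sq_sqrt_one_add_sub_one_le {β q : ℝ} (hβ : 0 ≤ β) (hq : 0 ≤ q)
    (h : β ≤ q + 2 * √q) : (√(1 + β) - 1) ^ 2 ≤ q := by
  have hq' : √q ^ 2 = q := Real.sq_sqrt hq
  have hupper : √(1 + β) ≤ 1 + √q :=
    Real.sqrt_le_iff.2 ⟨by positivity, by nlinarith⟩
  have hlower : 1 ≤ √(1 + β) := Real.one_le_sqrt.2 (by linarith)
  calc (√(1 + β) - 1) ^ 2 ≤ √q ^ 2 := pow_le_pow_left₀ (by linarith) (by linarith) 2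
    _ = q := hq'

section Spectral

variable {V : Type*} [Fintype V] {Adj : V → V → Prop}

theorem mulVec_apply_eq_sum_nbrs (c : ℝ) (f : V → ℝ) (x : V) :
    (c • Matrix.of fun x y : V => if Adj x y then (1 : ℝ) else 0).mulVec f x =
      c * ∑ y ∈ nbrs Adj x, f y := by
  simp [Matrix.mulVec, dotProduct, nbrs, sum_filter, mul_sum]

theorem signlessEnergy_eq_of_mulVec_eq (hsymm : ∀ x y : V, Adj x y → Adj y x) {d : ℕ}
    (hreg : ∀ x, #(nbrs Adj x) = d) (hd : d ≠ 0) {r : ℝ} {f : V → ℝ}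
    (hf : ((d : ℝ)⁻¹ • Matrix.of fun x y : V => if Adj x y then (1 : ℝ) else 0).mulVec f = r • f) :
    signlessEnergy Adj f = 2 * d * (1 + r) * ∑ x, f x ^ 2 := by
  have hrow : ∀ x, ∑ y ∈ nbrs Adj x, f y = d * r * f x := fun x => by
    have := congrFun hf x
    rw [mulVec_apply_eq_sum_nbrs, Pi.smul_apply, smul_eq_mul, inv_mul_eq_iff_eq_mul₀ (by simpa)]
      at this
    rw [this]
    ring
  have hswap : ∑ x, ∑ y ∈ nbrs Adj x, f y ^ 2 = d * ∑ x, f x ^ 2 := by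
    rw [sum_sum_nbrs_comm hsymm, mul_sum]
    simp [hreg]
  calc signlessEnergy Adj f
      = ∑ x, (#(nbrs Adj x) * f x ^ 2 + 2 * f x * ∑ y ∈ nbrs Adj x, f y) +
          ∑ x, ∑ y ∈ nbrs Adj x, f y ^ 2 := by
        simp only [signlessEnergy, add_sq, sum_add_distrib, sum_const, nsmul_eq_mul, mul_sum]
    _ = 2 * d * (1 + r) * ∑ x, f x ^ 2 := by
        simp only [hreg, hrow, hswap, mul_sum, ← sum_add_distrib]
        exact sum_congr rfl fun x _ => by ring

theorem le_one_add_of_mulVec_eq (hsymm : ∀ x y : V, Adj x y → Adj y x) {d : ℕ}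
    (hreg : ∀ x, #(nbrs Adj x) = d) {r : ℝ} {f : V → ℝ} (hf0 : f ≠ 0)
    (hf : ((d : ℝ)⁻¹ • Matrix.of fun x y : V => if Adj x y then (1 : ℝ) else 0).mulVec f = r • f) :
    (√(1 + betaOut Adj) - 1) ^ 2 / (2 * d) ≤ 1 + r := by
  rcases Nat.eq_zero_or_pos d with rfl | hd
  · have hr : r = 0 := by simpa [hf0] using hf.symm
    simp [hr]
  have hN : ∀ x, (nbrs Adj x).Nonempty := fun x => card_pos.1 (hreg x ▸ hd)
  have hS : 0 < ∑ x, f x ^ 2 := by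
    obtain ⟨x, hx⟩ := Function.ne_iff.1 hf0
    exact sum_pos' (fun x _ => sq_nonneg _) ⟨x, mem_univ _, pow_two_pos_of_ne_zero hx⟩
  have hE := signlessEnergy_eq_of_mulVec_eq hsymm hreg hd.ne' hf
  have hsweep := betaOut_mul_sum_sq_le hsymm hN f
  set q := 2 * (d : ℝ) * (1 + r)
  have hq : 0 ≤ q := by
    have : 0 ≤ signlessEnergy Adj f := sum_nonneg fun x _ => sum_nonneg fun y _ => sq_nonneg _
    nlinarith
  have hβ : betaOut Adj ≤ q + 2 * √q := by
    rw [hE, show (∑ x, f x ^ 2) * (q * ∑ x, f x ^ 2) = q * (∑ x, f x ^ 2) ^ 2 by ring,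
      Real.sqrt_mul hq, Real.sqrt_sq hS.le] at hsweep
    nlinarith
  rw [div_le_iff₀ (by positivity)]
  linarith [sq_sqrt_one_add_sub_one_le (betaOut_nonneg Adj) hq hβ]

end Spectral

/-- For a `d`-regular finite graph with smallest normalized adjacency eigenvalue `t₁`,
`1 + t₁ ≥ (√(1 + β_out) − 1)²/(2d)`. -/
theorem one_add_t1_ge_betaOut_bound {V : Type*} [Fintype V] [Nonempty V]
    (Adj : V → V → Prop)
    (hsymm : ∀ x y : V, Adj x y → Adj y x) (d : ℕ)
    (hreg : ∀ x : V, (Finset.univ.filter fun y => Adj x y).card = d)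
    (t1 : ℝ)
    (ht1 : t1 = sInf {r : ℝ | ∃ f : V → ℝ, f ≠ 0 ∧
      ((d : ℝ)⁻¹ • Matrix.of fun x y : V => if Adj x y then (1 : ℝ) else 0).mulVec f
        = r • f}) :
    1 + t1 ≥ (Real.sqrt (1 + betaOut Adj) - 1) ^ 2 / (2 * (d : ℝ)) := by
  have hreg' : ∀ x, #(nbrs Adj x) = d := hreg
  have hconst : ∃ r : ℝ, ∃ f : V → ℝ, f ≠ 0 ∧
      ((d : ℝ)⁻¹ • Matrix.of fun x y : V => if Adj x y then (1 : ℝ) else 0).mulVec f = r • f :=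
    ⟨(d : ℝ)⁻¹ * d, 1, one_ne_zero, funext fun x => by
      simp only [mulVec_apply_eq_sum_nbrs, Pi.one_apply, sum_const, hreg' x, Pi.smul_apply]
      simp⟩
  rw [ht1, ge_iff_le, ← sub_le_iff_le_add']
  exact le_csInf hconst fun r ⟨f, hf0, hf⟩ => by
    linarith [le_one_add_of_mulVec_eq hsymm hreg' hf0 hf]
end

section
/- There exists an absolute constant C > 0 such that the following holds. Let X be a finite group and S ⊆ X a normal subset (closed under conjugation), and suppose the Cayley sum graph G = C_Σ(X,S) is non-bipartite. Then h_out ≤ C·β_out, where h_out is the outer vertex isoperimetric constant and β_out is the outer vertex bipartiteness constant of G. -/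
attribute [local instance] Classical.propDecidable

/-- The outer vertex isoperimetric constant: the minimum of `|∂_out U|/|U|` over nonempty sets
`U` with `|U| ≤ |V|/2`. -/
noncomputable def hOut {V : Type*} [Fintype V] (Adj : V → V → Prop) : ℝ :=
  sInf {r : ℝ | ∃ U : Finset V, U.Nonempty ∧ 2 * U.card ≤ Fintype.card V ∧
    r = ((outBd Adj U).card : ℝ) / (U.card : ℝ)}

/-- A graph is bipartite if the vertex set can be partitioned into two parts such that every
edge joins the two parts. -/
def Bipartite {V : Type*} (Adj : V → V → Prop) : Prop :=
  ∃ P : V → Bool, ∀ x y, Adj x y → P x ≠ P y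

/-!
Suppose `h_out ≫ β_out`, witnessed by a disjoint pair `L, R`. Removing from `L` and `R` the
vertices with a neighbour on their own side leaves independent sets `P, Q` such that every edge
leaving `P ∪ Q` ends in a set `D` of size at most the numerator `b` of `β_out`; expansion then
forces `|P| ≈ |Q| ≈ |X| / 2`.

Normality of `S` gives `x ~ y ↔ g⁻¹ x ~ y g`, so `(P ∩ gP) ∪ {x ∈ Q | x g ∈ Q}` and the same set
with `P, Q` exchanged in the second factor are disjoint with boundaries inside `D ∪ gD ∪ Dg`, and
one of them is small. Hence every `g` nearly preserves or nearly swaps `P, Q`; a `g` that mixes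
them only moderately nearly preserves them with the error reset to `3 |D|`, so errors do not
accumulate along products. The elements `s⁻¹ t` (`s, t ∈ S`) nearly preserve `P, Q` by paths of
length two, and they generate `X` since the graph is connected and non-bipartite. So every
`|P ∩ gQ|` is `O(b / h_out)`, against `∑_g |P ∩ gQ| = |P| |Q| ≈ |X|² / 4`.
-/

open Finset
open scoped Pointwise

section Graph

variable {V : Type*}

def IsBipartiteUpTo (Adj : V → V → Prop) (P Q D : Finset V) : Prop :=
  (∀ x ∈ P, ∀ y, Adj x y → y ∈ Q ∪ D) ∧ (∀ x ∈ Q, ∀ y, Adj x y → y ∈ P ∪ D)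

lemma IsBipartiteUpTo.symm {Adj : V → V → Prop} {P Q D : Finset V}
    (h : IsBipartiteUpTo Adj P Q D) : IsBipartiteUpTo Adj Q P D :=
  ⟨h.2, h.1⟩

variable [Fintype V]

lemma hOut_nonneg (Adj : V → V → Prop) : 0 ≤ hOut Adj :=
  Real.sInf_nonneg <| by rintro _ ⟨U, -, -, rfl⟩; positivity

lemma hOut_mul_card_le (Adj : V → V → Prop) {T : Finset V} (hT : 2 * #T ≤ Fintype.card V) :
    hOut Adj * #T ≤ #(outBd Adj T) := by
  rcases T.eq_empty_or_nonempty with rfl | hne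
  · simp
  rw [← le_div_iff₀ (by exact_mod_cast hne.card_pos)]
  exact csInf_le ⟨0, by rintro _ ⟨U, -, -, rfl⟩; positivity⟩ ⟨T, hne, hT, rfl⟩

lemma hOut_le_two (Adj : V → V → Prop) : hOut Adj ≤ 2 := by
  rcases Nat.lt_or_ge (Fintype.card V) 2 with hn | hn
  · have hempty : {r : ℝ | ∃ U : Finset V, U.Nonempty ∧ 2 * #U ≤ Fintype.card V ∧
        r = #(outBd Adj U) / #U} = ∅ :=
      Set.eq_empty_of_forall_notMem fun r ⟨U, hU, hU2, _⟩ => by have := hU.card_pos; omega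
    rw [hOut, hempty, Real.sInf_empty]
    norm_num
  obtain ⟨T, -, hT⟩ := exists_subset_card_eq (s := (univ : Finset V))
    (n := Fintype.card V / 2) (by rw [card_univ]; omega)
  have hbd : #(outBd Adj T) ≤ 2 * #T := by
    have : outBd Adj T ⊆ Tᶜ := fun y hy => by simp_all [outBd]
    have := card_le_card this
    rw [card_compl] at this
    omega
  have hpos : (0 : ℝ) < #T := by rw [hT]; exact_mod_cast (by omega : 0 < Fintype.card V / 2)
  have := hOut_mul_card_le Adj (T := T) (by omega)
  have : hOut Adj * #T ≤ 2 * #T := this.trans (by exact_mod_cast hbd)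
  exact le_of_mul_le_mul_right this hpos

lemma hOut_mul_card_le_or_of_disjoint (Adj : V → V → Prop) {T₁ T₂ : Finset V}
    (h : Disjoint T₁ T₂) :
    hOut Adj * #T₁ ≤ #(outBd Adj T₁) ∨ hOut Adj * #T₂ ≤ #(outBd Adj T₂) := by
  have := card_union_of_disjoint h ▸ card_le_univ (T₁ ∪ T₂)
  by_cases h₁ : 2 * #T₁ ≤ Fintype.card V
  · exact .inl (hOut_mul_card_le Adj h₁)
  · exact .inr (hOut_mul_card_le Adj (by omega))

lemma card_le_card_inter_add_card_inter_add_card_compl (P Q T : Finset V) :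
    #T ≤ #(P ∩ T) + #(Q ∩ T) + #(P ∪ Q)ᶜ := by
  have hsub : T ⊆ (P ∩ T) ∪ (Q ∩ T) ∪ (P ∪ Q)ᶜ := fun x hx => by
    simp only [mem_union, mem_inter, mem_compl]; tauto
  calc #T ≤ #((P ∩ T) ∪ (Q ∩ T) ∪ (P ∪ Q)ᶜ) := card_le_card hsub
    _ ≤ #((P ∩ T) ∪ (Q ∩ T)) + #(P ∪ Q)ᶜ := card_union_le _ _
    _ ≤ _ := by gcongr; exact card_union_le _ _

variable {Adj : V → V → Prop}

lemma hOut_le_mul_betaOut [Nonempty V] {C : ℝ} (hC : 0 < C)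
    (hbound : ∀ L R : Finset V, Disjoint L R →
      hOut Adj * #(L ∪ R) ≤ C * (II Adj L + II Adj R + #(outBd Adj (L ∪ R)))) :
    hOut Adj ≤ C * betaOut Adj := by
  rw [← div_le_iff₀' hC, betaOut]
  refine le_csInf ⟨_, univ, ∅, disjoint_empty_right _, by simp, rfl⟩ ?_
  rintro _ ⟨L, R, hLR, hne, rfl⟩
  rw [div_le_div_iff₀ hC (by exact_mod_cast hne.card_pos)]
  linarith [hbound L R hLR]

lemma outBd_compl_union_outBd_subset (hAdj : ∀ x y, Adj x y → Adj y x) (U : Finset V) :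
    outBd Adj (U ∪ outBd Adj U)ᶜ ⊆ outBd Adj U := by
  intro y hy
  simp only [outBd, mem_filter, mem_univ, true_and, mem_compl, mem_union, not_or] at hy ⊢
  obtain ⟨hyW, x, ⟨hxU, hx⟩, hxy⟩ := hy
  have hyU : y ∉ U := fun hyU => hx ⟨hxU, y, hyU, hAdj x y hxy⟩
  exact ⟨hyU, by tauto⟩

lemma eq_univ_of_outBd_eq_empty (hAdj : ∀ x y, Adj x y → Adj y x) (hpos : 0 < hOut Adj)
    {T : Finset V} (hT : T.Nonempty) (hbd : outBd Adj T = ∅) : T = univ := by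
  have hbdc : outBd Adj Tᶜ = ∅ := by
    refine eq_empty_of_forall_notMem fun y hy => ?_
    simp only [outBd, mem_filter, mem_univ, true_and, mem_compl, not_not] at hy
    obtain ⟨hyT, x, hxT, hxy⟩ := hy
    have : x ∈ outBd Adj T := by
      simp only [outBd, mem_filter, mem_univ, true_and]
      exact ⟨hxT, y, hyT, hAdj x y hxy⟩
    simp [hbd] at this
  rcases hOut_mul_card_le_or_of_disjoint Adj (disjoint_compl_right (a := T)) with h | h
  · rw [hbd, card_empty, Nat.cast_zero] at h
    exact absurd h (mul_pos hpos (by exact_mod_cast hT.card_pos)).not_ge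
  · rw [hbdc, card_empty, Nat.cast_zero] at h
    have : (#Tᶜ : ℝ) = 0 := by nlinarith [(#Tᶜ).cast_nonneg (α := ℝ)]
    simpa using this

lemma isBipartiteUpTo_filter_not_exists {L R : Finset V} (hLR : Disjoint L R) :
    IsBipartiteUpTo Adj {x ∈ L | ¬∃ y ∈ L, Adj x y} {x ∈ R | ¬∃ y ∈ R, Adj x y}
      ({x ∈ L | ∃ y ∈ L, Adj x y} ∪ {x ∈ R | ∃ y ∈ R, Adj x y} ∪ outBd Adj (L ∪ R)) := by
  have key : ∀ {L R : Finset V}, Disjoint L R → ∀ x ∈ L, (¬∃ y ∈ L, Adj x y) →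
      ∀ y, Adj x y → y ∈ R ∨ y ∈ outBd Adj (L ∪ R) := by
    intro L R hLR x hxL hx y hxy
    by_cases hyR : y ∈ R
    · exact .inl hyR
    have hyL : y ∉ L := fun hyL => hx ⟨y, hyL, hxy⟩
    right
    simp only [outBd, mem_filter, mem_univ, true_and, mem_union]
    exact ⟨by tauto, x, .inl hxL, hxy⟩
  constructor
  · intro x hx y hxy
    simp only [mem_filter] at hx
    simp only [mem_union, mem_filter]
    rcases key hLR x hx.1 hx.2 y hxy with hy | hy
    · by_cases h : ∃ z ∈ R, Adj y z
      exacts [.inr (.inl (.inr ⟨hy, h⟩)), .inl ⟨hy, h⟩]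
    · exact .inr (.inr hy)
  · intro x hx y hxy
    simp only [mem_filter] at hx
    simp only [mem_union, mem_filter]
    rcases key hLR.symm x hx.1 hx.2 y hxy with hy | hy
    · by_cases h : ∃ z ∈ L, Adj y z
      exacts [.inr (.inl (.inl ⟨hy, h⟩)), .inl ⟨hy, h⟩]
    · exact .inr (.inr (union_comm R L ▸ hy))

end Graph

lemma Finset.sum_card_inter_smul {G : Type*} [Group G] [Fintype G] [DecidableEq G]
    (A B : Finset G) : ∑ g : G, #(A ∩ g • B) = #A * #B := by
  simp_rw [card_inter_smul, convolution]
  rw [← card_eq_sum_card_fiberwise (t := univ) (by simp), card_product, card_inv]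

section CayleySum

variable {X : Type*} [Group X] {S : Finset X} {P Q D : Finset X}

def cayleySumAdj (S : Finset X) (x y : X) : Prop := x * y ∈ S

lemma mem_smul_finset_iff_inv_mul_mem {g x : X} {A : Finset X} :
    x ∈ g • A ↔ g⁻¹ * x ∈ A :=
  inv_smul_mem_iff.symm

lemma cayleySumAdj_symm (hS : ∀ x : X, ∀ s ∈ S, x * s * x⁻¹ ∈ S) (x y : X) :
    cayleySumAdj S x y → cayleySumAdj S y x := fun h => by
  simpa [cayleySumAdj, mul_assoc] using hS y _ h

lemma bipartite_cayleySumAdj {K : Subgroup X} (hK : (S : Set X)⁻¹ * S ⊆ K)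
    (hcover : ∀ x, x ∈ K ∨ ∃ s ∈ S, s⁻¹ * x ∈ K) (hSK : ∀ s ∈ S, s ∉ K) :
    Bipartite (cayleySumAdj S) := by
  refine ⟨fun x => decide (x ∈ K), fun x y hxy => ?_⟩
  by_cases hx : x ∈ K <;> by_cases hy : y ∈ K <;> simp only [hx, hy, decide_true, decide_false,
    ne_eq, not_true_eq_false, not_false_eq_true, Bool.true_eq_false, Bool.false_eq_true]
  · exact hSK _ hxy (mul_mem hx hy)
  · obtain ⟨s, hs, hsx⟩ := (hcover x).resolve_left hx
    have hgen : s⁻¹ * (x * y) ∈ K := hK (Set.mul_mem_mul (by simpa using hs) hxy)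
    exact hy (by simpa [mul_assoc] using mul_mem (inv_mem hsx) hgen)

lemma card_le_card_add_card_of_isBipartiteUpTo
    (hsplit : IsBipartiteUpTo (cayleySumAdj S) P Q D) (hS₀ : S.Nonempty) : #P ≤ #Q + #D := by
  obtain ⟨s, hs⟩ := hS₀
  calc #P ≤ #(Q ∪ D) :=
        card_le_card_of_injOn (fun x => x⁻¹ * s)
          (fun x hx => hsplit.1 x hx _ (by simpa [cayleySumAdj] using hs))
          fun a _ b _ h => by simpa using h
    _ ≤ #Q + #D := card_union_le _ _

lemma card_inter_inv_smul (P Q : Finset X) (g : X) : #(P ∩ g⁻¹ • Q) = #(Q ∩ g • P) := by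
  rw [← card_smul_finset g, smul_finset_inter, smul_inv_smul, inter_comm]

variable [Fintype X]

lemma outBd_cayleySumAdj_eq_empty (hS : ∀ x : X, ∀ s ∈ S, x * s * x⁻¹ ∈ S) {K : Subgroup X}
    (hK : (S : Set X)⁻¹ * S ⊆ K) :
    outBd (cayleySumAdj S) {x | x ∈ K ∨ ∃ s ∈ S, s⁻¹ * x ∈ K} = ∅ := by
  refine eq_empty_of_forall_notMem fun y hy => ?_
  simp only [outBd, mem_filter, mem_univ, true_and] at hy
  obtain ⟨hy, x, hx, hxy⟩ := hy
  refine hy ?_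
  rcases hx with hxK | ⟨s, hs, hsx⟩
  · exact .inr ⟨y * x, cayleySumAdj_symm hS x y hxy, by simpa using inv_mem hxK⟩
  · have hgen : s⁻¹ * (x * y) ∈ K := hK (Set.mul_mem_mul (by simpa using hs) hxy)
    exact .inl (by simpa [mul_assoc] using mul_mem (inv_mem hsx) hgen)

lemma closure_inv_mul_eq_top (hS : ∀ x : X, ∀ s ∈ S, x * s * x⁻¹ ∈ S)
    (hnb : ¬Bipartite (cayleySumAdj S)) (hpos : 0 < hOut (cayleySumAdj S)) :
    Subgroup.closure ((S : Set X)⁻¹ * (S : Set X)) = ⊤ := by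
  set K := Subgroup.closure ((S : Set X)⁻¹ * (S : Set X))
  have hK : (S : Set X)⁻¹ * S ⊆ K := Subgroup.subset_closure
  have hcover : ∀ x, x ∈ K ∨ ∃ s ∈ S, s⁻¹ * x ∈ K := by
    have := eq_univ_of_outBd_eq_empty (cayleySumAdj_symm hS) hpos ⟨1, by simp [one_mem]⟩
      (outBd_cayleySumAdj_eq_empty hS hK)
    simpa [eq_univ_iff_forall] using this
  obtain ⟨s₀, hs₀, hs₀K⟩ : ∃ s ∈ S, s ∈ K := by
    by_contra! hSK
    exact hnb (bipartite_cayleySumAdj hK hcover hSK)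
  refine Subgroup.eq_top_iff' K |>.mpr fun x => (hcover x).elim id fun ⟨s, hs, hsx⟩ => ?_
  have hs : s ∈ K := by
    simpa using mul_mem hs₀K (hK (Set.mul_mem_mul (a := s₀⁻¹) (by simpa using hs₀) hs))
  simpa using mul_mem hs hsx

lemma card_le_two_mul_card_add (hsplit : IsBipartiteUpTo (cayleySumAdj S) P Q D)
    (hPQ : Disjoint P Q) (hS₀ : S.Nonempty) : Fintype.card X ≤ 2 * #P + #D + #(P ∪ Q)ᶜ := by
  have := card_le_card_add_card_of_isBipartiteUpTo hsplit.symm hS₀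
  have := card_union_of_disjoint hPQ
  have := card_add_card_compl (P ∪ Q)
  omega

lemma card_inter_mul_smul_le_add (P Q : Finset X) (a b : X) :
    #(P ∩ (a * b) • Q) ≤ #(P ∩ a • Q) + #(P ∩ b • Q) + #(P ∪ Q)ᶜ := by
  have hsub : P ∩ (a * b) • Q ⊆ (P ∩ a • Q) ∪ a • (P ∩ b • Q) ∪ a • (P ∪ Q)ᶜ := by
    intro x hx
    simp only [mem_union, mem_inter, mem_compl, mem_smul_finset_iff_inv_mul_mem, mul_inv_rev,
      mul_assoc] at hx ⊢
    tauto
  calc _ ≤ _ := card_le_card hsub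
    _ ≤ #(P ∩ a • Q) + #(a • (P ∩ b • Q)) + #(a • (P ∪ Q)ᶜ) :=
      (card_union_le _ _).trans (Nat.add_le_add_right (card_union_le _ _) _)
    _ = _ := by simp only [card_smul_finset]

lemma card_outBd_inter_smul_union_filter_le (hS : ∀ x : X, ∀ s ∈ S, x * s * x⁻¹ ∈ S)
    {P₁ Q₁ P₂ Q₂ : Finset X} (h₁ : IsBipartiteUpTo (cayleySumAdj S) P₁ Q₁ D)
    (h₂ : IsBipartiteUpTo (cayleySumAdj S) P₂ Q₂ D) (g : X) :
    #(outBd (cayleySumAdj S) ((P₁ ∩ g • P₂) ∪ {x ∈ Q₁ | x * g ∈ Q₂})) ≤ 3 * #D := by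
  have hsub : outBd (cayleySumAdj S) ((P₁ ∩ g • P₂) ∪ {x ∈ Q₁ | x * g ∈ Q₂}) ⊆
      D ∪ g • D ∪ ({y | y * g ∈ D} : Finset X) := by
    intro y hy
    simp only [outBd, mem_filter, mem_univ, true_and, mem_union, mem_inter,
      mem_smul_finset_iff_inv_mul_mem] at hy ⊢
    obtain ⟨hyB, x, hx, hxy⟩ := hy
    rcases hx with ⟨hxP, hxg⟩ | ⟨hxQ, hxg⟩
    · have hy₁ := h₁.1 x hxP y hxy
      -- normality of `S`: `x * y ∈ S ↔ g⁻¹ * x * (y * g) ∈ S`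
      have hy₂ := h₂.1 _ hxg (y * g) (by simpa [cayleySumAdj, mul_assoc] using hS g⁻¹ _ hxy)
      simp only [mem_union] at hy₁ hy₂
      tauto
    · have hy₁ := h₁.2 x hxQ y hxy
      have hy₂ := h₂.2 _ hxg (g⁻¹ * y) (by simpa [cayleySumAdj, mul_assoc] using hxy)
      simp only [mem_union] at hy₁ hy₂
      tauto
  have hright : #{y | y * g ∈ D} ≤ #D :=
    card_le_card_of_injOn (· * g) (fun y hy => (mem_filter.1 hy).2) (mul_left_injective g).injOn
  calc _ ≤ #(D ∪ g • D ∪ ({y | y * g ∈ D} : Finset X)) := card_le_card hsub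
    _ ≤ #D + #(g • D) + #{y | y * g ∈ D} :=
      (card_union_le _ _).trans (Nat.add_le_add_right (card_union_le _ _) _)
    _ ≤ 3 * #D := by rw [card_smul_finset]; omega

lemma hOut_mul_card_inter_smul_le_or (hS : ∀ x : X, ∀ s ∈ S, x * s * x⁻¹ ∈ S)
    (hsplit : IsBipartiteUpTo (cayleySumAdj S) P Q D) (hPQ : Disjoint P Q) (g : X) :
    hOut (cayleySumAdj S) * #(P ∩ g • P) ≤ 3 * #D ∨
      hOut (cayleySumAdj S) * #(P ∩ g • Q) ≤ 3 * #D := by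
  have hdisj :
      Disjoint ((P ∩ g • P) ∪ {x ∈ Q | x * g ∈ Q}) ((P ∩ g • Q) ∪ {x ∈ Q | x * g ∈ P}) := by
    refine disjoint_left.2 fun x hx hx' => ?_
    simp only [mem_union, mem_inter, mem_filter, mem_smul_finset_iff_inv_mul_mem] at hx hx'
    have hPQ' : ∀ y, y ∈ P → y ∉ Q := fun _ hy => disjoint_left.1 hPQ hy
    have := hPQ' x; have := hPQ' (g⁻¹ * x); have := hPQ' (x * g)
    tauto
  have h₀ := hOut_nonneg (cayleySumAdj S)
  refine (hOut_mul_card_le_or_of_disjoint (cayleySumAdj S) hdisj).imp (fun h => ?_) fun h => ?_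
  · calc _ ≤ hOut (cayleySumAdj S) * #((P ∩ g • P) ∪ {x ∈ Q | x * g ∈ Q}) := by
          gcongr; exact subset_union_left
      _ ≤ _ := h
      _ ≤ 3 * #D := by exact_mod_cast card_outBd_inter_smul_union_filter_le hS hsplit hsplit g
  · calc _ ≤ hOut (cayleySumAdj S) * #((P ∩ g • Q) ∪ {x ∈ Q | x * g ∈ P}) := by
          gcongr; exact subset_union_left
      _ ≤ _ := h
      _ ≤ 3 * #D := by
          exact_mod_cast card_outBd_inter_smul_union_filter_le hS hsplit hsplit.symm g

lemma card_inter_mul_smul_le_two_mul (hS : ∀ x : X, ∀ s ∈ S, x * s * x⁻¹ ∈ S)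
    (hsplit : IsBipartiteUpTo (cayleySumAdj S) P Q D) (hPQ : Disjoint P Q) {a b : X}
    (ha : a⁻¹ ∈ S) (hb : b ∈ S) : #(P ∩ (a * b) • Q) ≤ 2 * #D := by
  have hsub : P ∩ (a * b) • Q ⊆ D ∪ ({x | x⁻¹ * (a * b * a⁻¹) ∈ D} : Finset X) := by
    intro x hx
    rw [mem_inter, mem_smul_finset_iff_inv_mul_mem] at hx
    obtain ⟨hxP, hz⟩ := hx
    -- the path `(a * b)⁻¹ * x ~ x⁻¹ * (a * b * a⁻¹) ~ x` of length two
    have hw := hsplit.2 _ hz (x⁻¹ * (a * b * a⁻¹))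
      (by simpa [cayleySumAdj, mul_assoc] using ha)
    rw [mem_union] at hw ⊢
    rcases hw with hwP | hwD
    · have hx := hsplit.1 _ hwP x
        (by simpa [cayleySumAdj, mul_assoc] using hS x⁻¹ _ (hS a b hb))
      exact .inl ((mem_union.1 hx).resolve_left (disjoint_left.1 hPQ hxP))
    · exact .inr (mem_filter.2 ⟨mem_univ x, hwD⟩)
  have hright : #({x | x⁻¹ * (a * b * a⁻¹) ∈ D} : Finset X) ≤ #D :=
    card_le_card_of_injOn (·⁻¹ * (a * b * a⁻¹)) (fun x hx => (mem_filter.1 hx).2)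
      fun x _ y _ h => by simpa using h
  calc _ ≤ _ := card_le_card hsub
    _ ≤ _ := card_union_le _ _
    _ ≤ 2 * #D := by omega

lemma hOut_mul_card_le_two_mul_add (hsplit : IsBipartiteUpTo (cayleySumAdj S) P Q D)
    (hPQ : Disjoint P Q) (hS₀ : S.Nonempty) :
    hOut (cayleySumAdj S) * Fintype.card X ≤
      2 * (hOut (cayleySumAdj S) * #P) + 2 * #D + hOut (cayleySumAdj S) * #(P ∪ Q)ᶜ := by
  have h₀ := hOut_nonneg (cayleySumAdj S)
  have hn := mul_le_mul_of_nonneg_left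
    (Nat.cast_le (α := ℝ).2 (card_le_two_mul_card_add hsplit hPQ hS₀)) h₀
  push_cast at hn
  nlinarith [mul_le_mul_of_nonneg_right (hOut_le_two (cayleySumAdj S)) ((#D).cast_nonneg (α := ℝ))]

/-- A `g` that mixes `P` and `Q` only moderately nearly preserves them, with the error reset to
`3 * #D`; this is why errors do not accumulate along products. -/
lemma hOut_mul_card_inter_smul_le_of_le (hS : ∀ x : X, ∀ s ∈ S, x * s * x⁻¹ ∈ S)
    (hsplit : IsBipartiteUpTo (cayleySumAdj S) P Q D) (hPQ : Disjoint P Q) (hS₀ : S.Nonempty)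
    (hbig : 26 * (#D + hOut (cayleySumAdj S) * #(P ∪ Q)ᶜ) <
      hOut (cayleySumAdj S) * Fintype.card X) {g : X}
    (hg : hOut (cayleySumAdj S) * #(P ∩ g • Q) ≤
      9 * #D + hOut (cayleySumAdj S) * #(P ∪ Q)ᶜ) :
    hOut (cayleySumAdj S) * #(P ∩ g • Q) ≤ 3 * #D ∧
      hOut (cayleySumAdj S) * #(Q ∩ g • P) ≤ 3 * #D := by
  have hP := hOut_mul_card_le_two_mul_add hsplit hPQ hS₀
  have hQ := hOut_mul_card_le_two_mul_add hsplit.symm hPQ.symm hS₀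
  rw [union_comm Q P] at hQ
  have hcover (T : Finset X) :
      hOut (cayleySumAdj S) * #T ≤ hOut (cayleySumAdj S) * #(P ∩ g • T) +
        hOut (cayleySumAdj S) * #(Q ∩ g • T) + hOut (cayleySumAdj S) * #(P ∪ Q)ᶜ := by
    have hT := card_le_card_inter_add_card_inter_add_card_compl P Q (g • T)
    rw [card_smul_finset] at hT
    have := mul_le_mul_of_nonneg_left (Nat.cast_le (α := ℝ).2 hT)
      (hOut_nonneg (cayleySumAdj S))
    push_cast at this
    linarith
  have hμ := mul_nonneg (hOut_nonneg (cayleySumAdj S)) (Nat.cast_nonneg (α := ℝ) #(P ∪ Q)ᶜ)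
  have hd := Nat.cast_nonneg (α := ℝ) #D
  have hQP := (hOut_mul_card_inter_smul_le_or hS hsplit.symm hPQ.symm g).resolve_left
    fun hQQ => by linarith [hcover Q]
  exact ⟨(hOut_mul_card_inter_smul_le_or hS hsplit hPQ g).resolve_left
    fun hPP => by linarith [hcover P], hQP⟩

lemma hOut_mul_card_inter_smul_le (hS : ∀ x : X, ∀ s ∈ S, x * s * x⁻¹ ∈ S)
    (hsplit : IsBipartiteUpTo (cayleySumAdj S) P Q D) (hPQ : Disjoint P Q) (hS₀ : S.Nonempty)
    (hbig : 26 * (#D + hOut (cayleySumAdj S) * #(P ∪ Q)ᶜ) <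
      hOut (cayleySumAdj S) * Fintype.card X)
    (htop : Subgroup.closure ((S : Set X)⁻¹ * (S : Set X)) = ⊤) (g : X) :
    hOut (cayleySumAdj S) * #(P ∩ g • Q) ≤ 3 * #D ∧
      hOut (cayleySumAdj S) * #(Q ∩ g • P) ≤ 3 * #D := by
  have h₀ := hOut_nonneg (cayleySumAdj S)
  have hμ := mul_nonneg h₀ (Nat.cast_nonneg (α := ℝ) #(P ∪ Q)ᶜ)
  have hd := Nat.cast_nonneg (α := ℝ) #D
  have upgrade := fun {g : X} => hOut_mul_card_inter_smul_le_of_le hS hsplit hPQ hS₀ hbig (g := g)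
  have hg : g ∈ Subgroup.closure ((S : Set X)⁻¹ * (S : Set X)) := htop ▸ Subgroup.mem_top g
  induction hg using Subgroup.closure_induction with
  | mem g hg =>
    obtain ⟨a, ha, b, hb, rfl⟩ := Set.mem_mul.1 hg
    have hab : (#(P ∩ (a * b) • Q) : ℝ) ≤ 2 * #D := by
      exact_mod_cast card_inter_mul_smul_le_two_mul hS hsplit hPQ (Set.mem_inv.1 ha) hb
    refine upgrade ?_
    nlinarith [hOut_le_two (cayleySumAdj S)]
  | one => simp [disjoint_iff_inter_eq_empty.1 hPQ, disjoint_iff_inter_eq_empty.1 hPQ.symm]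
  | mul a b _ _ ha hb =>
    refine upgrade ?_
    have hab := mul_le_mul_of_nonneg_left
      (Nat.cast_le (α := ℝ).2 (card_inter_mul_smul_le_add P Q a b)) h₀
    push_cast at hab
    linarith [ha.1, hb.1]
  | inv a _ ha =>
    refine upgrade ?_
    rw [card_inter_inv_smul]
    linarith [ha.2]

theorem hOut_mul_card_le_of_isBipartiteUpTo (hS : ∀ x : X, ∀ s ∈ S, x * s * x⁻¹ ∈ S)
    (hnb : ¬Bipartite (cayleySumAdj S)) (hsplit : IsBipartiteUpTo (cayleySumAdj S) P Q D)
    (hPQ : Disjoint P Q) :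
    hOut (cayleySumAdj S) * Fintype.card X ≤
      26 * (#D + hOut (cayleySumAdj S) * #(P ∪ Q)ᶜ) := by
  by_contra! hbig
  have h₀ := hOut_nonneg (cayleySumAdj S)
  have hμ := mul_nonneg h₀ (Nat.cast_nonneg (α := ℝ) #(P ∪ Q)ᶜ)
  have hd := Nat.cast_nonneg (α := ℝ) #D
  have hpos : 0 < hOut (cayleySumAdj S) := by
    refine h₀.lt_of_ne fun h => ?_
    rw [← h, zero_mul] at hbig
    linarith
  have hS₀ : S.Nonempty := by
    refine nonempty_iff_ne_empty.2 fun hS₀ => hnb ⟨fun _ => true, fun x y hxy => ?_⟩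
    simp [cayleySumAdj, hS₀] at hxy
  have hcross := hOut_mul_card_inter_smul_le hS hsplit hPQ hS₀ hbig
    (closure_inv_mul_eq_top hS hnb hpos)
  have hsum : hOut (cayleySumAdj S) * (#P * #Q) ≤ 3 * #D * Fintype.card X :=
    calc hOut (cayleySumAdj S) * (#P * #Q)
        = ∑ g : X, hOut (cayleySumAdj S) * #(P ∩ g • Q) := by
          rw [← mul_sum, ← Nat.cast_mul, ← sum_card_inter_smul P Q, Nat.cast_sum]
      _ ≤ ∑ _g : X, 3 * (#D : ℝ) := sum_le_sum fun g _ => (hcross g).1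
      _ = 3 * #D * Fintype.card X := by rw [sum_const, card_univ, nsmul_eq_mul]; ring
  have hP := hOut_mul_card_le_two_mul_add hsplit hPQ hS₀
  have hQ := hOut_mul_card_le_two_mul_add hsplit.symm hPQ.symm hS₀
  rw [union_comm Q P] at hQ
  set a := hOut (cayleySumAdj S) * Fintype.card X
  have hx : 12 * a < 26 * (hOut (cayleySumAdj S) * #P) := by linarith
  have hy : 12 * a < 26 * (hOut (cayleySumAdj S) * #Q) := by linarith
  have hxy : (hOut (cayleySumAdj S) * #P) * (hOut (cayleySumAdj S) * #Q) ≤ 3 * #D * a := by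
    nlinarith [mul_le_mul_of_nonneg_left hsum h₀]
  nlinarith [mul_lt_mul'' hx hy (by positivity) (by positivity)]

theorem hOut_mul_card_union_le (hS : ∀ x : X, ∀ s ∈ S, x * s * x⁻¹ ∈ S)
    (hnb : ¬Bipartite (cayleySumAdj S)) {L R : Finset X} (hLR : Disjoint L R) :
    hOut (cayleySumAdj S) * #(L ∪ R) ≤
      104 * (II (cayleySumAdj S) L + II (cayleySumAdj S) R +
        #(outBd (cayleySumAdj S) (L ∪ R))) := by
  set A := cayleySumAdj S
  set U := L ∪ R
  set b : ℝ := II A L + II A R + #(outBd A U)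
  have h₀ := hOut_nonneg A
  have hb : (#(outBd A U) : ℝ) ≤ b := by
    simp only [b]
    linarith [(II A L).cast_nonneg (α := ℝ), (II A R).cast_nonneg (α := ℝ)]
  by_cases hU : 2 * #U ≤ Fintype.card X
  · linarith [hOut_mul_card_le A hU]
  set D := {x ∈ L | ∃ y ∈ L, A x y} ∪ {x ∈ R | ∃ y ∈ R, A x y} ∪ outBd A U
  set P := {x ∈ L | ¬∃ y ∈ L, A x y}
  set Q := {x ∈ R | ¬∃ y ∈ R, A x y}
  set W := (U ∪ outBd A U)ᶜ
  have hD : (#D : ℝ) ≤ b := by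
    have : #D ≤ II A L + II A R + #(outBd A U) :=
      (card_union_le _ _).trans (Nat.add_le_add_right (card_union_le _ _) _)
    simp only [b]
    exact_mod_cast this
  have hW : hOut A * #W ≤ #(outBd A U) := by
    have hWU : #W ≤ #Uᶜ := card_le_card (compl_subset_compl.2 subset_union_left)
    rw [card_compl U] at hWU
    refine (hOut_mul_card_le A (by omega)).trans ?_
    exact_mod_cast card_le_card (outBd_compl_union_outBd_subset (cayleySumAdj_symm hS) U)
  have hM : (P ∪ Q)ᶜ ⊆ D ∪ W := by
    intro z hz
    simp only [P, Q, mem_compl, mem_union, mem_filter, not_or, not_and, not_not] at hz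
    simp only [D, W, mem_union, mem_compl, mem_filter]
    by_cases hzL : z ∈ L
    · exact .inl (.inl (.inl ⟨hzL, hz.1 hzL⟩))
    by_cases hzR : z ∈ R
    · exact .inl (.inl (.inr ⟨hzR, hz.2 hzR⟩))
    by_cases hzb : z ∈ outBd A U
    · exact .inl (.inr hzb)
    · exact .inr (by simp [U, hzL, hzR, hzb])
  have hμ : hOut A * #(P ∪ Q)ᶜ ≤ 3 * b := by
    have := mul_le_mul_of_nonneg_left (Nat.cast_le (α := ℝ).2
      ((card_le_card hM).trans (card_union_le D W))) h₀
    push_cast at this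
    nlinarith [hOut_le_two A, (#D).cast_nonneg (α := ℝ)]
  have hcore : hOut A * Fintype.card X ≤ 26 * (#D + hOut A * #(P ∪ Q)ᶜ) :=
    hOut_mul_card_le_of_isBipartiteUpTo hS hnb (isBipartiteUpTo_filter_not_exists hLR)
      (hLR.mono (filter_subset _ _) (filter_subset _ _))
  have hUn := mul_le_mul_of_nonneg_left (Nat.cast_le (α := ℝ).2 (card_le_univ U)) h₀
  linarith

end CayleySum

/-- There is an absolute constant `C > 0` such that for every non-bipartite Cayley sum graph
`C_Σ(X,S)` of a finite group `X` with respect to a normal subset `S` (adjacency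
`x ∼ y ↔ xy ∈ S`), one has `h_out ≤ C β_out`. -/
theorem cayleySum_hOut_le_betaOut :
    ∃ C > (0 : ℝ),
      ∀ (X : Type) [Group X] [Fintype X] (S : Finset X),
        (∀ x : X, ∀ s ∈ S, x * s * x⁻¹ ∈ S) →
        ¬ Bipartite (fun x y : X => x * y ∈ S) →
        hOut (fun x y : X => x * y ∈ S) ≤ C * betaOut (fun x y : X => x * y ∈ S) :=
  ⟨104, by norm_num, fun _ _ _ _ hS hnb =>
    hOut_le_mul_betaOut (by norm_num) fun _ _ hLR => hOut_mul_card_union_le hS hnb hLR⟩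
end

section
/- Let G = (V,E) be a finite graph and let A, B, C, D be subsets of V. Then |∂_out((A ∩ C) ∪ (B ∩ D))| ≤ I(A) + I(B) + I(C) + I(D) + |∂_out(A ∪ B)| + |∂_out(C ∪ D)|. -/
attribute [local instance] Classical.propDecidable

lemma mem_outBd {V : Type*} [Fintype V] (Adj : V → V → Prop) (U : Finset V) (y : V) :
    y ∈ outBd Adj U ↔ y ∉ U ∧ ∃ x ∈ U, Adj x y := by
  simp [outBd]

/-- For any subsets `A, B, C, D` of the vertex set of a finite graph,
`|∂_out((A ∩ C) ∪ (B ∩ D))| ≤ I(A) + I(B) + I(C) + I(D) + |∂_out(A ∪ B)| + |∂_out(C ∪ D)|`. -/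
theorem outBd_inter_union_bound {V : Type*} [Fintype V] (Adj : V → V → Prop)
    (hsymm : ∀ x y : V, Adj x y → Adj y x) (A B C D : Finset V) :
    (outBd Adj ((A ∩ C) ∪ (B ∩ D))).card ≤
      II Adj A + II Adj B + II Adj C + II Adj D +
        (outBd Adj (A ∪ B)).card + (outBd Adj (C ∪ D)).card := by
  classical
  set FA := A.filter fun x => ∃ y ∈ A, Adj x y with hFA
  set FB := B.filter fun x => ∃ y ∈ B, Adj x y with hFB
  set FC := C.filter fun x => ∃ y ∈ C, Adj x y with hFC
  set FD := D.filter fun x => ∃ y ∈ D, Adj x y with hFD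
  have hsub : outBd Adj ((A ∩ C) ∪ (B ∩ D)) ⊆
      FA ∪ FB ∪ FC ∪ FD ∪ outBd Adj (A ∪ B) ∪ outBd Adj (C ∪ D) := by
    intro y hy
    rw [mem_outBd] at hy
    simp only [Finset.mem_union, Finset.mem_inter, not_or, not_and_or] at hy
    obtain ⟨⟨hAC, hBD⟩, x, hx, hadj⟩ := hy
    have hyx := hsymm x y hadj
    by_cases hAB : y ∈ A ∪ B
    · by_cases hCD : y ∈ C ∪ D
      · simp only [Finset.mem_union] at hAB hCD
        simp only [Finset.mem_union, hFA, hFB, hFC, hFD, Finset.mem_filter]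
        rcases hx with ⟨hxA, hxC⟩ | ⟨hxB, hxD⟩
        · rcases hAB with hyA | hyB
          · exact Or.inl (Or.inl (Or.inl (Or.inl (Or.inl ⟨hyA, x, hxA, hyx⟩))))
          · have hyC : y ∈ C := by
              rcases hCD with h | h
              · exact h
              · rcases hBD with h2 | h2 <;> [exact absurd hyB h2; exact absurd h h2]
            exact Or.inl (Or.inl (Or.inl (Or.inr ⟨hyC, x, hxC, hyx⟩)))
        · rcases hAB with hyA | hyB
          · have hyD : y ∈ D := by
              rcases hCD with h | h
              · rcases hAC with h2 | h2 <;> [exact absurd hyA h2; exact absurd h h2]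
              · exact h
            exact Or.inl (Or.inl (Or.inr ⟨hyD, x, hxD, hyx⟩))
          · exact Or.inl (Or.inl (Or.inl (Or.inl (Or.inr ⟨hyB, x, hxB, hyx⟩))))
      · refine Finset.mem_union_right _ ?_
        rw [mem_outBd]
        refine ⟨hCD, x, ?_, hadj⟩
        rcases hx with ⟨_, h⟩ | ⟨_, h⟩ <;> simp [Finset.mem_union, h]
    · refine Finset.mem_union_left _ (Finset.mem_union_right _ ?_)
      rw [mem_outBd]
      refine ⟨hAB, x, ?_, hadj⟩
      rcases hx with ⟨h, _⟩ | ⟨h, _⟩ <;> simp [Finset.mem_union, h]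
  calc (outBd Adj ((A ∩ C) ∪ (B ∩ D))).card
      ≤ (FA ∪ FB ∪ FC ∪ FD ∪ outBd Adj (A ∪ B) ∪ outBd Adj (C ∪ D)).card :=
        Finset.card_le_card hsub
    _ ≤ II Adj A + II Adj B + II Adj C + II Adj D +
        (outBd Adj (A ∪ B)).card + (outBd Adj (C ∪ D)).card := by
        refine le_trans (Finset.card_union_le _ _) (Nat.add_le_add ?_ le_rfl)
        refine le_trans (Finset.card_union_le _ _) (Nat.add_le_add ?_ le_rfl)
        refine le_trans (Finset.card_union_le _ _) (Nat.add_le_add ?_ le_rfl)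
        refine le_trans (Finset.card_union_le _ _) (Nat.add_le_add ?_ le_rfl)
        exact le_trans (Finset.card_union_le _ _) le_rfl
end

section
/- Fix k ≥ 1 and a unit vector e ∈ ℝ^k. For t ∈ [0,1], define Y_t : {v ∈ ℝ^k : ‖v‖ ≤ 1} → ℝ^k by Y_t(z) = z/‖z‖ if ‖z‖ ≥ t (with the convention z/‖z‖ = e when z = 0) and Y_t(z) = 0 if ‖z‖ < t. Then for all z₁, z₂ ∈ ℝ^k with ‖z₁‖ ≤ 1 and ‖z₂‖ ≤ 1, ∫₀¹ ‖Y_{√t}(z₁) − Y_{√t}(z₂)‖ dt ≤ (√5/2)·‖z₁ − z₂‖·(‖z₁‖ + ‖z₂‖). -/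
/-! For `t > 0` we have `Y_{√t}(z) = z/‖z‖` if `t ≤ ‖z‖²` and `0` otherwise (the vector `e` only
matters at `t = 0`, a null set). So if `b = ‖z₂‖ ≤ a = ‖z₁‖` and `uᵢ = zᵢ/‖zᵢ‖`, the integrand is a
step function and the integral is `b² ‖u₁ - u₂‖ + (a² - b²) ‖u₁‖ ≤ b² c + (a² - b²)` with
`c = ‖u₁ - u₂‖`. Since `‖z₁ - z₂‖² = (a - b)² + ab c²`, it remains to show a real inequality: with
`w = √(ab)`, Cauchy–Schwarz gives `2(a - b) + wc ≤ √5 ‖z₁ - z₂‖`, and `b² ≤ (a + b)/2 · w`, so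
`b² c + (a² - b²) ≤ (a + b)/2 · (2(a - b) + wc)`. -/

attribute [local instance] Classical.propDecidable

/-- For a fixed unit vector `e ∈ ℝ^k` and `t ∈ [0,1]`, the map `Y_t` on the closed unit ball of
`ℝ^k`: `Y_t(z) = z/‖z‖` if `‖z‖ ≥ t` (with `z/‖z‖ = e` when `z = 0`) and `Y_t(z) = 0` if
`‖z‖ < t`. -/
noncomputable def Yvec {k : ℕ} (e : EuclideanSpace ℝ (Fin k)) (t : ℝ)
    (z : EuclideanSpace ℝ (Fin k)) : EuclideanSpace ℝ (Fin k) :=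
  if t ≤ ‖z‖ then (if z = 0 then e else ‖z‖⁻¹ • z) else 0

open MeasureTheory Set

theorem integral_zero_one_ite_le_ite_le {E : Type*} [NormedAddCommGroup E] [NormedSpace ℝ E]
    [CompleteSpace E] {p q : ℝ} (c n : E) (hp : 0 ≤ p) (hpq : p ≤ q) (hq : q ≤ 1) :
    ∫ t in (0 : ℝ)..1, (if t ≤ p then c else if t ≤ q then n else 0) = p • c + (q - p) • n := by
  have h_indicator : (fun t : ℝ ↦ if t ≤ p then c else if t ≤ q then n else 0) =
      fun t ↦ (Iic p).indicator (fun _ ↦ c) t + (Ioc p q).indicator (fun _ ↦ n) t := by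
    ext t
    by_cases htp : t ≤ p
    · have : t ∉ Ioc p q := fun h ↦ (not_lt.2 htp) h.1
      simp [htp, this]
    · by_cases htq : t ≤ q <;> simp [htp, htq, lt_of_not_ge htp]
  have h_int (s : Set ℝ) (hs : MeasurableSet s) (x : E) :
      IntegrableOn (s.indicator fun _ ↦ x) (Ioc 0 1) :=
    (integrableOn_const (by simp)).indicator hs
  rw [h_indicator, intervalIntegral.integral_of_le zero_le_one,
    integral_add (h_int _ measurableSet_Iic c) (h_int _ measurableSet_Ioc n),
    setIntegral_indicator measurableSet_Iic, setIntegral_indicator measurableSet_Ioc,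
    Ioc_inter_Iic, min_eq_right (hpq.trans hq), Ioc_inter_Ioc, max_eq_right hp,
    min_eq_right hq, setIntegral_const, setIntegral_const,
    Real.volume_real_Ioc_of_le hp, Real.volume_real_Ioc_of_le hpq, sub_zero]

theorem norm_sub_sq_eq_sq_sub_add_mul_norm_inv_smul_sub_sq {E : Type*} [NormedAddCommGroup E]
    [InnerProductSpace ℝ E] (x y : E) :
    ‖x - y‖ ^ 2 = (‖x‖ - ‖y‖) ^ 2 + ‖x‖ * ‖y‖ * ‖‖x‖⁻¹ • x - ‖y‖⁻¹ • y‖ ^ 2 := by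
  rcases eq_or_ne x 0 with rfl | hx
  · simp
  rcases eq_or_ne y 0 with rfl | hy
  · simp
  have hx' : ‖x‖ ≠ 0 := norm_ne_zero_iff.2 hx
  have hy' : ‖y‖ ≠ 0 := norm_ne_zero_iff.2 hy
  rw [norm_sub_sq_real, norm_sub_sq_real, real_inner_smul_left, real_inner_smul_right,
    norm_smul, norm_smul, norm_inv, norm_inv, norm_norm, norm_norm]
  field_simp
  ring

theorem sq_mul_add_sq_sub_sq_le_sqrt_five_div_two_mul {a b c d : ℝ} (hb : 0 ≤ b) (hba : b ≤ a)
    (hc : 0 ≤ c) (hd : 0 ≤ d) (hd_sq : d ^ 2 = (a - b) ^ 2 + a * b * c ^ 2) :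
    b ^ 2 * c + (a ^ 2 - b ^ 2) ≤ √5 / 2 * d * (a + b) := by
  set w := √(a * b)
  have hw_sq : w ^ 2 = a * b := Real.sq_sqrt (mul_nonneg (hb.trans hba) hb)
  have hbw : b ≤ w := (Real.le_sqrt hb (mul_nonneg (hb.trans hba) hb)).2 (by nlinarith)
  have h_cauchy_schwarz : 2 * (a - b) + w * c ≤ √5 * d := by
    have h_sq : (2 * (a - b) + w * c) ^ 2 ≤ (√5 * d) ^ 2 := by
      rw [mul_pow, Real.sq_sqrt (by norm_num : (0 : ℝ) ≤ 5)]
      nlinarith [sq_nonneg (a - b - 2 * (w * c))]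
    exact le_of_pow_le_pow_left₀ two_ne_zero (by positivity) h_sq
  calc b ^ 2 * c + (a ^ 2 - b ^ 2) ≤ (a + b) / 2 * (2 * (a - b) + w * c) := by
        have : b * b ≤ (a + b) / 2 * w := mul_le_mul (by linarith) hbw hb (by linarith)
        nlinarith [mul_le_mul_of_nonneg_right this hc]
    _ ≤ (a + b) / 2 * (√5 * d) := by gcongr; linarith
    _ = √5 / 2 * d * (a + b) := by ring

theorem Yvec_sqrt_of_pos {k : ℕ} (e z : EuclideanSpace ℝ (Fin k)) {t : ℝ} (ht : 0 < t) :
    Yvec e √t z = if t ≤ ‖z‖ ^ 2 then ‖z‖⁻¹ • z else 0 := by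
  simp only [Yvec, Real.sqrt_le_left (norm_nonneg z)]
  rcases eq_or_ne z 0 with rfl | hz
  · simp [not_le.2 ht]
  · simp [hz]

theorem integral_norm_Yvec_sqrt_sub {k : ℕ} (e : EuclideanSpace ℝ (Fin k))
    {z₁ z₂ : EuclideanSpace ℝ (Fin k)} (h₁ : ‖z₁‖ ≤ 1) (h₂₁ : ‖z₂‖ ≤ ‖z₁‖) :
    ∫ t in (0 : ℝ)..1, ‖Yvec e √t z₁ - Yvec e √t z₂‖ =
      ‖z₂‖ ^ 2 * ‖‖z₁‖⁻¹ • z₁ - ‖z₂‖⁻¹ • z₂‖ + (‖z₁‖ ^ 2 - ‖z₂‖ ^ 2) * ‖‖z₁‖⁻¹ • z₁‖ := by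
  have h_sq : ‖z₂‖ ^ 2 ≤ ‖z₁‖ ^ 2 := pow_le_pow_left₀ (norm_nonneg _) h₂₁ 2
  have h₁_sq : ‖z₁‖ ^ 2 ≤ 1 := pow_le_one₀ (norm_nonneg _) h₁
  rw [← smul_eq_mul, ← smul_eq_mul,
    ← integral_zero_one_ite_le_ite_le _ _ (sq_nonneg _) h_sq h₁_sq]
  refine intervalIntegral.integral_congr_ae (Filter.Eventually.of_forall fun t ht ↦ ?_)
  rw [uIoc_of_le zero_le_one] at ht
  rw [Yvec_sqrt_of_pos _ _ ht.1, Yvec_sqrt_of_pos _ _ ht.1]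
  by_cases ht₂ : t ≤ ‖z₂‖ ^ 2
  · simp [ht₂, ht₂.trans h_sq]
  · by_cases ht₁ : t ≤ ‖z₁‖ ^ 2 <;> simp [ht₁, ht₂]

theorem integral_Yvec_le_general {k : ℕ} (e : EuclideanSpace ℝ (Fin k))
    (z₁ z₂ : EuclideanSpace ℝ (Fin k)) (h₁ : ‖z₁‖ ≤ 1) (h₂ : ‖z₂‖ ≤ 1) :
    ∫ t in (0 : ℝ)..1, ‖Yvec e (Real.sqrt t) z₁ - Yvec e (Real.sqrt t) z₂‖ ≤
      Real.sqrt 5 / 2 * ‖z₁ - z₂‖ * (‖z₁‖ + ‖z₂‖) := by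
  wlog h₂₁ : ‖z₂‖ ≤ ‖z₁‖ generalizing z₁ z₂
  · simpa only [norm_sub_rev z₂ z₁, add_comm ‖z₂‖, norm_sub_rev (Yvec e _ z₂)]
      using this z₂ z₁ h₂ h₁ (le_of_not_ge h₂₁)
  have h_unit : ‖‖z₁‖⁻¹ • z₁‖ ≤ 1 := by
    rw [norm_smul, norm_inv, norm_norm]
    exact inv_mul_le_one_of_le₀ le_rfl (norm_nonneg _)
  rw [integral_norm_Yvec_sqrt_sub e h₁ h₂₁]
  calc _ ≤ ‖z₂‖ ^ 2 * ‖‖z₁‖⁻¹ • z₁ - ‖z₂‖⁻¹ • z₂‖ + (‖z₁‖ ^ 2 - ‖z₂‖ ^ 2) := by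
        gcongr
        exact mul_le_of_le_one_right (sub_nonneg.2 (by gcongr)) h_unit
    _ ≤ _ := sq_mul_add_sq_sub_sq_le_sqrt_five_div_two_mul (norm_nonneg _) h₂₁ (norm_nonneg _)
        (norm_nonneg _) (norm_sub_sq_eq_sq_sub_add_mul_norm_inv_smul_sub_sq z₁ z₂)

/-- Lemma of Bandeira–Singer–Spielman: for any `z₁, z₂` in the closed unit ball of `ℝ^k`,
`∫₀¹ ‖Y_{√t}(z₁) − Y_{√t}(z₂)‖ dt ≤ (√5/2) ‖z₁ − z₂‖ (‖z₁‖ + ‖z₂‖)`. -/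
theorem integral_Yvec_le {k : ℕ} (hk : 1 ≤ k) (e : EuclideanSpace ℝ (Fin k)) (he : ‖e‖ = 1)
    (z₁ z₂ : EuclideanSpace ℝ (Fin k)) (h₁ : ‖z₁‖ ≤ 1) (h₂ : ‖z₂‖ ≤ 1) :
    ∫ t in (0 : ℝ)..1, ‖Yvec e (Real.sqrt t) z₁ - Yvec e (Real.sqrt t) z₂‖ ≤
      Real.sqrt 5 / 2 * ‖z₁ - z₂‖ * (‖z₁‖ + ‖z₂‖) :=
  integral_Yvec_le_general e z₁ z₂ h₁ h₂
end
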